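/- arXiv:2209.03098 — 13 statements merged into one kernel-verified Lean document; each statement's English description precedes it below -/
import Mathlib

section
/- Let y₋, y₊ > 0 and d ∈ (−1, 1) be real numbers, and define the real polynomial F(X) = ((1+d)/2)·(X + y₋)³·((X − (3/2)y₊)² + (3/4)y₊² + 1) + ((1−d)/2)·(X − y₊)³·((X + (3/2)y₋)² + (3/4)y₋² + 1). Then F has exactly one real root. -/
/-!
With `P a b z = (z + a)³ ((z - 3b/2)² + 3b²/4 + 1)` (`quinticPart`), the polynomial is
`F z = (1+d)/2 · P y₋ y₊ z - (1-d)/2 · P y₊ y₋ (-z)`. The first term has the sign of `z + y₋`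
and the second that of `y₊ - z`, so `F < 0` left of `-y₋`, `F > 0` right of `y₊`, and by the
intermediate value theorem `F` vanishes in between. There the zeros of `F` are the solutions of
`P y₋ y₊ z / P y₊ y₋ (-z) = (1-d)/(1+d)`, and this ratio is strictly increasing: the numerator
of its derivative factors as `(z+y₋)²(y₊-z)²` times a sum of two positive terms.
-/

open Set

theorem strictMonoOn_div_of_hasDerivAt {f g f' g' : ℝ → ℝ} {s : Set ℝ} (hs : Convex ℝ s)
    (hso : IsOpen s) (hf : ∀ x ∈ s, HasDerivAt f (f' x) x) (hg : ∀ x ∈ s, HasDerivAt g (g' x) x)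
    (hg₀ : ∀ x ∈ s, g x ≠ 0) (hpos : ∀ x ∈ s, 0 < f' x * g x - f x * g' x) :
    StrictMonoOn (fun x => f x / g x) s := by
  have hdiv : ∀ x ∈ s,
      HasDerivAt (fun x => f x / g x) ((f' x * g x - f x * g' x) / g x ^ 2) x :=
    fun x hx => (hf x hx).div (hg x hx) (hg₀ x hx)
  refine strictMonoOn_of_hasDerivWithinAt_pos hs
    (f' := fun x => (f' x * g x - f x * g' x) / g x ^ 2)
    (fun x hx => (hdiv x hx).continuousAt.continuousWithinAt) (fun x hx => ?_) (fun x hx => ?_)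
  · rw [hso.interior_eq] at hx ⊢
    exact (hdiv x hx).hasDerivWithinAt
  · rw [hso.interior_eq] at hx
    exact div_pos (hpos x hx) (sq_pos_of_ne_zero (hg₀ x hx))

theorem existsUnique_sub_eq_zero_of_strictMonoOn_div {f g : ℝ → ℝ} {a b c₁ c₂ : ℝ} (hab : a < b)
    (hc₁ : 0 < c₁) (hc₂ : 0 < c₂) (hf : Continuous f) (hg : Continuous g)
    (hf_nonpos : ∀ x ≤ a, f x ≤ 0) (hf_pos : ∀ x, a < x → 0 < f x)
    (hg_pos : ∀ x < b, 0 < g x) (hg_nonpos : ∀ x, b ≤ x → g x ≤ 0)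
    (hmono : StrictMonoOn (fun x => f x / g x) (Ioo a b)) :
    ∃! x, c₁ * f x - c₂ * g x = 0 := by
  have h_neg : ∀ x ≤ a, c₁ * f x - c₂ * g x < 0 := fun x hx => by
    nlinarith [hf_nonpos x hx, hg_pos x (hx.trans_lt hab)]
  have h_pos : ∀ x, b ≤ x → 0 < c₁ * f x - c₂ * g x := fun x hx => by
    nlinarith [hf_pos x (hab.trans_le hx), hg_nonpos x hx]
  have h_mem : ∀ x, c₁ * f x - c₂ * g x = 0 → x ∈ Ioo a b := fun x hx =>
    ⟨not_le.1 fun h => (h_neg x h).ne hx, not_le.1 fun h => (h_pos x h).ne' hx⟩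
  have h_ratio : ∀ x, c₁ * f x - c₂ * g x = 0 → f x / g x = c₂ / c₁ := fun x hx => by
    rw [div_eq_div_iff (hg_pos x (h_mem x hx).2).ne' hc₁.ne']
    linarith
  obtain ⟨x, -, hx⟩ : ∃ x ∈ Ioo a b, c₁ * f x - c₂ * g x = 0 :=
    intermediate_value_Ioo hab.le (by fun_prop) ⟨h_neg a le_rfl, h_pos b le_rfl⟩
  refine ⟨x, hx, fun y hy => hmono.injOn (h_mem y hy) (h_mem x hx) ?_⟩
  simp only [h_ratio y hy, h_ratio x hx]

noncomputable def quadFactor (b z : ℝ) : ℝ := (z - 3 / 2 * b) ^ 2 + 3 / 4 * b ^ 2 + 1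

noncomputable def quinticPart (a b z : ℝ) : ℝ := (z + a) ^ 3 * quadFactor b z

theorem quadFactor_pos (b z : ℝ) : 0 < quadFactor b z := by
  unfold quadFactor
  positivity

theorem quinticPart_pos {a b z : ℝ} (hz : -a < z) : 0 < quinticPart a b z :=
  mul_pos (pow_pos (by linarith) 3) (quadFactor_pos b z)

theorem quinticPart_nonpos {a b z : ℝ} (hz : z ≤ -a) : quinticPart a b z ≤ 0 :=
  mul_nonpos_of_nonpos_of_nonneg (Odd.pow_nonpos (by decide) (by linarith))
    (quadFactor_pos b z).le

theorem continuous_quinticPart (a b : ℝ) : Continuous (quinticPart a b) := by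
  unfold quinticPart quadFactor
  fun_prop

theorem hasDerivAt_quinticPart (a b z : ℝ) :
    HasDerivAt (quinticPart a b)
      ((z + a) ^ 2 * (3 * quadFactor b z + 2 * (z + a) * (z - 3 / 2 * b))) z := by
  have h := (((hasDerivAt_id' z).add_const a).fun_pow 3).fun_mul
    (((((hasDerivAt_id' z).sub_const (3 / 2 * b)).fun_pow 2).add_const (3 / 4 * b ^ 2)).add_const 1)
  exact h.congr_deriv (by simp only [quadFactor]; push_cast; ring)

theorem strictMonoOn_quinticPart_div (a b : ℝ) :
    StrictMonoOn (fun z => quinticPart a b z / quinticPart b a (-z)) (Ioo (-a) b) := by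
  refine strictMonoOn_div_of_hasDerivAt (convex_Ioo _ _) isOpen_Ioo
    (fun z _ => hasDerivAt_quinticPart a b z)
    (fun z _ => (hasDerivAt_quinticPart b a (-z)).comp z (hasDerivAt_neg z))
    (fun z hz => (quinticPart_pos (b := a) (by linarith [hz.2])).ne') (fun z hz => ?_)
  have hu : 0 < z + a := by linarith [hz.1]
  have hv : 0 < b - z := by linarith [hz.2]
  have key : (z + a) ^ 2 * (3 * quadFactor b z + 2 * (z + a) * (z - 3 / 2 * b)) *
        quinticPart b a (-z) -
      quinticPart a b z * ((-z + b) ^ 2 * (3 * quadFactor a (-z) + 2 * (-z + b) * (-z - 3 / 2 * a))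
        * -1) =
      (z + a) ^ 2 * (b - z) ^ 2 *
        ((z + a) * quadFactor a (-z) * ((z - 2 * b) ^ 2 + 2 * b ^ 2 + 3) +
          (b - z) * quadFactor b z * ((z + 2 * a) ^ 2 + 2 * a ^ 2 + 3)) := by
    simp only [quinticPart, quadFactor]
    ring
  rw [key]
  have := quadFactor_pos b z
  have := quadFactor_pos a (-z)
  positivity

/-- The quintic polynomial `F` built from parameters `y₋, y₊ > 0` and `d ∈ (-1,1)`
has exactly one real root. -/
theorem stmt_0 (ym yp d : ℝ) (hym : 0 < ym) (hyp : 0 < yp)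
    (hd₁ : -1 < d) (hd₂ : d < 1) :
    ∃! z : ℝ,
      ((1 + d) / 2) * (z + ym) ^ 3 * ((z - (3 / 2) * yp) ^ 2 + (3 / 4) * yp ^ 2 + 1) +
        ((1 - d) / 2) * (z - yp) ^ 3 * ((z + (3 / 2) * ym) ^ 2 + (3 / 4) * ym ^ 2 + 1) = 0 := by
  have hF : ∀ z : ℝ,
      ((1 + d) / 2) * (z + ym) ^ 3 * ((z - (3 / 2) * yp) ^ 2 + (3 / 4) * yp ^ 2 + 1) +
        ((1 - d) / 2) * (z - yp) ^ 3 * ((z + (3 / 2) * ym) ^ 2 + (3 / 4) * ym ^ 2 + 1) =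
      (1 + d) / 2 * quinticPart ym yp z - (1 - d) / 2 * quinticPart yp ym (-z) := fun z => by
    simp only [quinticPart, quadFactor]
    ring
  simp only [hF]
  exact existsUnique_sub_eq_zero_of_strictMonoOn_div (by linarith) (by linarith) (by linarith)
    (continuous_quinticPart ym yp) ((continuous_quinticPart yp ym).comp continuous_neg)
    (fun z hz => quinticPart_nonpos hz) (fun z hz => quinticPart_pos hz)
    (fun z hz => quinticPart_pos (neg_lt_neg hz)) (fun z hz => quinticPart_nonpos (neg_le_neg hz))
    (strictMonoOn_quinticPart_div ym yp)
end

section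
/- Let y₋, y₊ > 0 and d ∈ (−1, 1) be real numbers, and define F(X) = ((1+d)/2)·(X + y₋)³·((X − (3/2)y₊)² + (3/4)y₊² + 1) + ((1−d)/2)·(X − y₊)³·((X + (3/2)y₋)² + (3/4)y₋² + 1). Then the unique real root z of F is a simple root, i.e. F'(z) ≠ 0. -/
/-!
Write `F = P - Q` with `P = c₊ u³ g`, `Q = c₋ v³ h`, where `u = z + y₋`, `v = y₊ - z` and `g, h > 0`
are the quadratic factors. At a root `P = Q = K`; the cubes then have the same sign and
`u + v = y₋ + y₊ > 0`, so `u, v > 0` and `K > 0`. Hence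
`F'(z) = K (P'/P - Q'/Q) = K ((3/v + g'/g) + (3/u - h'/h))`,
and both brackets are positive because `3 g - 2 v (v + y₊/2) = (v + y₊)² + 2 y₊² + 3`.
-/

theorem two_mul_lt_three_mul_sq_add (v y : ℝ) :
    2 * v * (v + y / 2) < 3 * ((v + y / 2) ^ 2 + 3 / 4 * y ^ 2 + 1) := by
  nlinarith [sq_nonneg (v + y), sq_nonneg y]

theorem pos_and_pos_of_mul_pow_three_eq {a b g h u v : ℝ} (ha : 0 < a) (hb : 0 < b)
    (hg : 0 < g) (hh : 0 < h) (huv : 0 < u + v) (hE : a * u ^ 3 * g = b * v ^ 3 * h) :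
    0 < u ∧ 0 < v := by
  have hodd : Odd 3 := by decide
  have hiff : 0 < u ↔ 0 < v := by
    rw [← hodd.pow_pos_iff, ← hodd.pow_pos_iff (a := v), ← mul_pos_iff_of_pos_left ha,
      ← mul_pos_iff_of_pos_right hg, hE, mul_pos_iff_of_pos_right hh, mul_pos_iff_of_pos_left hb]
  have hone : 0 < u ∨ 0 < v := by
    by_contra! hcon
    linarith [hcon.1, hcon.2]
  rcases hone with hu | hv
  · exact ⟨hu, hiff.mp hu⟩
  · exact ⟨hiff.mpr hv, hv⟩

theorem hasDerivAt_quintic (a b ym yp x : ℝ) :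
    HasDerivAt (fun z => a * (z + ym) ^ 3 * ((z - 3 / 2 * yp) ^ 2 + 3 / 4 * yp ^ 2 + 1) +
        b * (z - yp) ^ 3 * ((z + 3 / 2 * ym) ^ 2 + 3 / 4 * ym ^ 2 + 1))
      (a * (x + ym) ^ 2 * (3 * ((x - 3 / 2 * yp) ^ 2 + 3 / 4 * yp ^ 2 + 1) -
          2 * (x + ym) * (yp - x + yp / 2)) +
        b * (yp - x) ^ 2 * (3 * ((x + 3 / 2 * ym) ^ 2 + 3 / 4 * ym ^ 2 + 1) -
          2 * (yp - x) * (x + ym + ym / 2))) x := by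
  have hid := hasDerivAt_id' x
  have hg := (((hid.sub_const (3 / 2 * yp)).fun_pow 2).add_const (3 / 4 * yp ^ 2)).add_const 1
  have hh := (((hid.add_const (3 / 2 * ym)).fun_pow 2).add_const (3 / 4 * ym ^ 2)).add_const 1
  refine (((((hid.add_const ym).fun_pow 3).const_mul a).mul hg).add
    ((((hid.sub_const yp).fun_pow 3).const_mul b).mul hh)).congr_deriv ?_
  push_cast
  ring

theorem mul_sq_add_mul_sq_pos {a b g h u v p q : ℝ} (ha : 0 < a)
    (hg : 0 < g) (hh : 0 < h) (hu : 0 < u) (hv : 0 < v)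
    (hE : a * u ^ 3 * g = b * v ^ 3 * h) (hp : 2 * v * p < 3 * g) (hq : 2 * u * q < 3 * h) :
    0 < a * u ^ 2 * (3 * g - 2 * u * p) + b * v ^ 2 * (3 * h - 2 * v * q) := by
  -- `a u³ g = b v³ h = K` exchanges the two cubic factors: each quadratic bound pairs with the
  -- cube of the other factor.
  have key :
      (a * u ^ 2 * (3 * g - 2 * u * p) + b * v ^ 2 * (3 * h - 2 * v * q)) * (u * v * g * h) =
      a * u ^ 3 * g * (u * h * (3 * g - 2 * v * p) + v * g * (3 * h - 2 * u * q)) := by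
    linear_combination (-(3 * u * g * h - 2 * u * v * g * q)) * hE
  have hK : 0 < a * u ^ 3 * g := by positivity
  have hsum : 0 < u * h * (3 * g - 2 * v * p) + v * g * (3 * h - 2 * u * q) := by
    have hp' := sub_pos.2 hp
    have hq' := sub_pos.2 hq
    positivity
  refine (mul_pos_iff_of_pos_right (by positivity : 0 < u * v * g * h)).mp ?_
  rw [key]
  exact mul_pos hK hsum

/-- The unique real root of the quintic `F` is simple: `F'(z) ≠ 0` at any real root `z`. -/
theorem stmt_1 (ym yp d : ℝ) (hym : 0 < ym) (hyp : 0 < yp)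
    (hd₁ : -1 < d) (hd₂ : d < 1) (F : ℝ → ℝ)
    (hF : F = fun z : ℝ =>
      ((1 + d) / 2) * (z + ym) ^ 3 * ((z - (3 / 2) * yp) ^ 2 + (3 / 4) * yp ^ 2 + 1) +
        ((1 - d) / 2) * (z - yp) ^ 3 * ((z + (3 / 2) * ym) ^ 2 + (3 / 4) * ym ^ 2 + 1))
    (z : ℝ) (hz : F z = 0) :
    deriv F z ≠ 0 := by
  subst hF
  have ha : 0 < (1 + d) / 2 := by linarith
  have hb : 0 < (1 - d) / 2 := by linarith
  have hg : 0 < (z - 3 / 2 * yp) ^ 2 + 3 / 4 * yp ^ 2 + 1 := by positivity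
  have hh : 0 < (z + 3 / 2 * ym) ^ 2 + 3 / 4 * ym ^ 2 + 1 := by positivity
  have hE : (1 + d) / 2 * (z + ym) ^ 3 * ((z - 3 / 2 * yp) ^ 2 + 3 / 4 * yp ^ 2 + 1) =
      (1 - d) / 2 * (yp - z) ^ 3 * ((z + 3 / 2 * ym) ^ 2 + 3 / 4 * ym ^ 2 + 1) := by
    linear_combination hz
  obtain ⟨hu, hv⟩ := pos_and_pos_of_mul_pow_three_eq ha hb hg hh (by linarith) hE
  rw [(hasDerivAt_quintic _ _ ym yp z).deriv]
  exact (mul_sq_add_mul_sq_pos ha hg hh hu hv hE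
    ((two_mul_lt_three_mul_sq_add (yp - z) yp).trans_eq (by ring))
    ((two_mul_lt_three_mul_sq_add (z + ym) ym).trans_eq (by ring))).ne'
end

section
/- Let y₋, y₊ > 0 be real numbers and define the real polynomials H(X) = (y₋² + 1)X² + (3y₋² + y₊y₋ + 2)X + (y₊² + 3y₋² + 3y₊y₋ + 1) and R(X) = (3y₊² + y₋² + 3y₊y₋ + 1)X² + (3y₊² + y₊y₋ + 2)X + (y₊² + 1). Then H and R have no real root, and the function f : ℝ → ℝ defined by f(ξ) = ξ³·H(ξ)/R(ξ) is strictly increasing and is a bijection from ℝ onto ℝ. -/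
/-!
The discriminants of `H` and `R` are `-(3y₋² + 4)(y₋ + y₊)²` and `-(3y₊² + 4)(y₋ + y₊)²`, so
both quadratics are positive and `f` is smooth on `ℝ`. The quotient
rule gives `f'(ξ) = 3ξ²(ξ + 1)² Q(ξ) / R(ξ)²` for a further quadratic `Q`, whose discriminant is,
up to sign, a polynomial in `y₋, y₊` with positive coefficients. Hence `f' > 0` away from
`ξ ∈ {0, -1}`, and `f` is strictly increasing. Since `H/R` tends to a positive constant at `±∞`,
`f` behaves like a positive multiple of `ξ³` there, so it is onto by the intermediate value theorem.
-/

open Filter Topology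

theorem quadratic_pos_of_discrim_neg {K : Type*} [Field K] [LinearOrder K] [IsStrictOrderedRing K]
    {a b c : K} (ha : 0 < a) (h : discrim a b c < 0) (x : K) : 0 < a * x ^ 2 + b * x + c := by
  rw [discrim] at h
  nlinarith [sq_nonneg (2 * a * x + b)]

theorem hasDerivAt_quadratic {𝕜 : Type*} [NontriviallyNormedField 𝕜] (a b c x : 𝕜) :
    HasDerivAt (fun x => a * x ^ 2 + b * x + c) (2 * a * x + b) x :=
  ((((hasDerivAt_pow 2 x).const_mul a).fun_add ((hasDerivAt_id' x).const_mul b)).add_const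
    c).congr_deriv (by ring)

theorem tendsto_quadratic_div_quadratic {l : Filter ℝ} (hl : Tendsto (·⁻¹) l (𝓝 0))
    (hl₀ : ∀ᶠ x in l, x ≠ 0) {a b c A B C : ℝ} (hA : A ≠ 0) :
    Tendsto (fun x => (a * x ^ 2 + b * x + c) / (A * x ^ 2 + B * x + C)) l (𝓝 (a / A)) := by
  have hcont : ContinuousAt (fun t => (a + b * t + c * t ^ 2) / (A + B * t + C * t ^ 2)) 0 :=
    ContinuousAt.div (by fun_prop) (by fun_prop) (by simpa using hA)
  have hlim : Tendsto (fun x => (a + b * x⁻¹ + c * x⁻¹ ^ 2) / (A + B * x⁻¹ + C * x⁻¹ ^ 2)) l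
      (𝓝 (a / A)) := by
    simpa [Function.comp_def] using hcont.tendsto.comp hl
  refine hlim.congr' ?_
  filter_upwards [hl₀] with x hx
  rw [← mul_div_mul_right _ _ (pow_ne_zero 2 hx)]
  congr 1 <;> field_simp

theorem Odd.tendsto_pow_atBot {α : Type*} [Ring α] [LinearOrder α] [IsStrictOrderedRing α]
    {n : ℕ} (hn : Odd n) : Tendsto (fun x : α => x ^ n) atBot atBot := by
  have h := tendsto_neg_atTop_atBot.comp
    ((tendsto_pow_atTop (α := α) hn.pos.ne').comp tendsto_neg_atBot_atTop)
  convert h using 2 with x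
  simp [hn.neg_pow]

theorem strictMono_of_hasDerivAt_nonneg {f f' : ℝ → ℝ} (hf : ∀ x, HasDerivAt f (f' x) x)
    (hf' : ∀ x, 0 ≤ f' x) (hzero : {x | f' x = 0}.Finite) : StrictMono f := by
  have hmono : Monotone f := monotone_of_deriv_nonneg (fun x => (hf x).differentiableAt)
    fun x => (hf x).deriv ▸ hf' x
  refine fun u v h => (hmono h.le).lt_of_ne fun huv => ?_
  -- `f` would be constant on the infinite interval `(u, v)`, where `f'` would then vanish
  refine (Set.Ioo_infinite h).mono (fun x hx => ?_) hzero
  have hconst : f =ᶠ[𝓝 x] fun _ => f u := by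
    filter_upwards [Ioo_mem_nhds hx.1 hx.2] with y hy
    exact le_antisymm (huv ▸ hmono hy.2.le) (hmono hy.1.le)
  exact (hf x).unique ((hasDerivAt_const x (f u)).congr_of_eventuallyEq hconst)

def doubletH (ym yp x : ℝ) : ℝ :=
  (ym ^ 2 + 1) * x ^ 2 + (3 * ym ^ 2 + yp * ym + 2) * x +
    (yp ^ 2 + 3 * ym ^ 2 + 3 * yp * ym + 1)

def doubletR (ym yp x : ℝ) : ℝ :=
  (3 * yp ^ 2 + ym ^ 2 + 3 * yp * ym + 1) * x ^ 2 + (3 * yp ^ 2 + yp * ym + 2) * x +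
    (yp ^ 2 + 1)

noncomputable def doubletF (ym yp ξ : ℝ) : ℝ :=
  ξ ^ 3 * doubletH ym yp ξ / doubletR ym yp ξ

def doubletQ (ym yp x : ℝ) : ℝ :=
  (ym ^ 4 + 3 * ym ^ 3 * yp + 3 * ym ^ 2 * yp ^ 2 + 2 * ym ^ 2 + 3 * ym * yp + 3 * yp ^ 2 + 1) *
      x ^ 2 +
    2 * (ym ^ 3 * yp + 3 * ym ^ 2 * yp ^ 2 + ym * yp ^ 3 + ym ^ 2 + yp ^ 2 + 1) * x +
    (yp ^ 4 + 3 * yp ^ 3 * ym + 3 * ym ^ 2 * yp ^ 2 + 2 * yp ^ 2 + 3 * ym * yp + 3 * ym ^ 2 + 1)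

theorem doubletR_leadingCoeff_pos (ym yp : ℝ) : 0 < 3 * yp ^ 2 + ym ^ 2 + 3 * yp * ym + 1 := by
  nlinarith [sq_nonneg (2 * ym + 3 * yp)]

section

variable {ym yp : ℝ}

theorem doubletH_pos (h : ym + yp ≠ 0) (x : ℝ) : 0 < doubletH ym yp x := by
  refine quadratic_pos_of_discrim_neg (by positivity) ?_ x
  have hdisc : discrim (ym ^ 2 + 1) (3 * ym ^ 2 + yp * ym + 2)
      (yp ^ 2 + 3 * ym ^ 2 + 3 * yp * ym + 1) = -((3 * ym ^ 2 + 4) * (ym + yp) ^ 2) := by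
    rw [discrim]; ring
  rw [hdisc, neg_neg_iff_pos]
  positivity

theorem doubletR_pos (h : ym + yp ≠ 0) (x : ℝ) : 0 < doubletR ym yp x := by
  refine quadratic_pos_of_discrim_neg (doubletR_leadingCoeff_pos ym yp) ?_ x
  have hdisc : discrim (3 * yp ^ 2 + ym ^ 2 + 3 * yp * ym + 1) (3 * yp ^ 2 + yp * ym + 2)
      (yp ^ 2 + 1) = -((3 * yp ^ 2 + 4) * (ym + yp) ^ 2) := by
    rw [discrim]; ring
  rw [hdisc, neg_neg_iff_pos]
  positivity

theorem doubletQ_pos (hym : 0 < ym) (hyp : 0 < yp) (x : ℝ) : 0 < doubletQ ym yp x := by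
  refine quadratic_pos_of_discrim_neg (by positivity) ?_ x
  -- every coefficient of the expanded polynomial `-discrim` is positive
  rw [discrim, ← neg_pos]
  ring_nf
  positivity

theorem hasDerivAt_doubletF (x : ℝ) (hx : doubletR ym yp x ≠ 0) :
    HasDerivAt (doubletF ym yp)
      (3 * x ^ 2 * (x + 1) ^ 2 * doubletQ ym yp x / doubletR ym yp x ^ 2) x := by
  refine (((hasDerivAt_pow 3 x).fun_mul (hasDerivAt_quadratic _ _ _ x)).fun_div
    (hasDerivAt_quadratic _ _ _ x) hx).congr_deriv ?_
  unfold doubletR doubletQ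
  ring

theorem continuous_doubletF (h : ym + yp ≠ 0) : Continuous (doubletF ym yp) :=
  continuous_iff_continuousAt.2 fun x =>
    (hasDerivAt_doubletF x (doubletR_pos h x).ne').continuousAt

theorem strictMono_doubletF (hym : 0 < ym) (hyp : 0 < yp) : StrictMono (doubletF ym yp) := by
  have hR x := (doubletR_pos (by positivity : ym + yp ≠ 0) x).ne'
  have hQ x := doubletQ_pos hym hyp x
  refine strictMono_of_hasDerivAt_nonneg (fun x => hasDerivAt_doubletF x (hR x))
    (fun x => by have := hQ x; positivity) ((Set.toFinite {0, -1}).subset fun x hx => ?_)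
  simpa [(hQ x).ne', hR, add_eq_zero_iff_eq_neg] using hx

theorem tendsto_doubletH_div_doubletR {l : Filter ℝ} (hl : Tendsto (·⁻¹) l (𝓝 0))
    (hl₀ : ∀ᶠ x in l, x ≠ 0) :
    Tendsto (fun x => doubletH ym yp x / doubletR ym yp x) l
      (𝓝 ((ym ^ 2 + 1) / (3 * yp ^ 2 + ym ^ 2 + 3 * yp * ym + 1))) :=
  tendsto_quadratic_div_quadratic hl hl₀ (doubletR_leadingCoeff_pos ym yp).ne'

theorem tendsto_doubletF_atTop : Tendsto (doubletF ym yp) atTop atTop := by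
  have hC := div_pos (add_pos_of_nonneg_of_pos (sq_nonneg ym) one_pos)
    (doubletR_leadingCoeff_pos ym yp)
  refine ((tendsto_pow_atTop three_ne_zero).atTop_mul_pos hC ?_).congr fun x =>
    (mul_div_assoc _ _ _).symm
  exact tendsto_doubletH_div_doubletR tendsto_inv_atTop_zero (eventually_ne_atTop 0)

theorem tendsto_doubletF_atBot : Tendsto (doubletF ym yp) atBot atBot := by
  have hC := div_pos (add_pos_of_nonneg_of_pos (sq_nonneg ym) one_pos)
    (doubletR_leadingCoeff_pos ym yp)
  refine ((show Odd 3 by decide).tendsto_pow_atBot.atBot_mul_pos hC ?_).congr fun x =>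
    (mul_div_assoc _ _ _).symm
  exact tendsto_doubletH_div_doubletR tendsto_inv_atBot_zero (eventually_ne_atBot 0)

end

/-- `H` and `R` have no real root, and `f(ξ) = ξ³ H(ξ)/R(ξ)` is strictly increasing and a
bijection from `ℝ` onto `ℝ`. -/
theorem stmt_2 (ym yp : ℝ) (hym : 0 < ym) (hyp : 0 < yp)
    (H R f : ℝ → ℝ)
    (hH : H = fun x : ℝ =>
      (ym ^ 2 + 1) * x ^ 2 + (3 * ym ^ 2 + yp * ym + 2) * x +
        (yp ^ 2 + 3 * ym ^ 2 + 3 * yp * ym + 1))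
    (hR : R = fun x : ℝ =>
      (3 * yp ^ 2 + ym ^ 2 + 3 * yp * ym + 1) * x ^ 2 + (3 * yp ^ 2 + yp * ym + 2) * x +
        (yp ^ 2 + 1))
    (hf : f = fun ξ : ℝ => ξ ^ 3 * H ξ / R ξ) :
    (∀ x : ℝ, H x ≠ 0) ∧ (∀ x : ℝ, R x ≠ 0) ∧ StrictMono f ∧ Function.Bijective f := by
  obtain rfl : H = doubletH ym yp := hH
  obtain rfl : R = doubletR ym yp := hR
  obtain rfl : f = doubletF ym yp := hf
  have hsum : ym + yp ≠ 0 := by positivity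
  have hmono := strictMono_doubletF hym hyp
  exact ⟨fun x => (doubletH_pos hsum x).ne', fun x => (doubletR_pos hsum x).ne', hmono,
    hmono.injective, (continuous_doubletF hsum).surjective tendsto_doubletF_atTop
      tendsto_doubletF_atBot⟩
end

section
/- Let w₁, w₂ > 0 and define Q₁(x₁,x₂,x₃,h) = −x₁(3h² + x₁²) + x₃(3h² + x₃²) − w₁ and Q₂(x₁,x₂,x₃,h) = x₂(3h² + x₂²) − x₃(3h² + x₃²) − w₂. Then at every real point (x₁,x₂,x₃,h) ∈ ℝ⁴ satisfying Q₁ = 0 and Q₂ = 0, the gradients ∇Q₁ and ∇Q₂ are linearly independent; in other words, the real variety {Q₁ = Q₂ = 0} ⊂ ℝ⁴ has no singular points. -/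
/-- At every real point of the variety `{Q₁ = Q₂ = 0}` defined by the volume-constraint
polynomials of a cell doublet (with `w₁, w₂ > 0`), the gradients of `Q₁` and `Q₂` are
linearly independent: the real variety has no singular points. -/
theorem stmt_5 (w₁ w₂ : ℝ) (hw₁ : 0 < w₁) (hw₂ : 0 < w₂)
    (x₁ x₂ x₃ h : ℝ)
    (hQ₁ : -x₁ * (3 * h ^ 2 + x₁ ^ 2) + x₃ * (3 * h ^ 2 + x₃ ^ 2) - w₁ = 0)
    (hQ₂ : x₂ * (3 * h ^ 2 + x₂ ^ 2) - x₃ * (3 * h ^ 2 + x₃ ^ 2) - w₂ = 0) :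
    LinearIndependent ℝ
      ![![-(3 * h ^ 2 + 3 * x₁ ^ 2), 0, 3 * h ^ 2 + 3 * x₃ ^ 2, 6 * h * (x₃ - x₁)],
        ![0, 3 * h ^ 2 + 3 * x₂ ^ 2, -(3 * h ^ 2 + 3 * x₃ ^ 2), 6 * h * (x₂ - x₃)]] := by
  rw [LinearIndependent.pair_iff]
  intro s t hst
  have e0 := congrFun hst 0
  have e1 := congrFun hst 1
  have e2 := congrFun hst 2
  simp [Pi.add_apply, Pi.smul_apply, smul_eq_mul] at e0 e1 e2
  have hs : s = 0 := by
    rcases e0 with h' | hX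
    · exact h'
    by_contra hs
    have hh : h = 0 := by nlinarith
    have hx1 : x₁ = 0 := by nlinarith
    have hx3 : x₃ ≠ 0 := by
      intro h3
      rw [hh, hx1, h3] at hQ₁; nlinarith
    have hst' : s = t := by
      have hc : (3 * h ^ 2 + 3 * x₃ ^ 2) * (s - t) = 0 := by nlinarith [e2]
      have hX3 : 3 * h ^ 2 + 3 * x₃ ^ 2 ≠ 0 := by positivity
      rcases mul_eq_zero.mp hc with h' | h'
      · exact absurd h' hX3
      · linarith
    have hx2 : x₂ ≠ 0 := by
      intro h2
      rw [hh, hx1] at hQ₁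
      rw [hh, h2] at hQ₂
      nlinarith
    rcases e1 with h' | h'
    · exact hs (hst'.trans h')
    · have : 3 * h ^ 2 + 3 * x₂ ^ 2 ≠ 0 := by positivity
      exact this h'
  refine ⟨hs, ?_⟩
  rcases e1 with h' | hX2
  · exact h'
  by_contra ht
  have hh : h = 0 := by nlinarith
  have hx2 : x₂ = 0 := by nlinarith
  have hx3 : x₃ ≠ 0 := by
    intro h3
    rw [hh, hx2, h3] at hQ₂; nlinarith
  have hc : t * (3 * h ^ 2 + 3 * x₃ ^ 2) = 0 := by rw [hs] at e2; nlinarith [e2]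
  have hX3 : 3 * h ^ 2 + 3 * x₃ ^ 2 ≠ 0 := by positivity
  rcases mul_eq_zero.mp hc with h' | h'
  · exact ht h'
  · exact hX3 h'
end

section
/- Let t₁, t₂, t₃ > 0 and define E(x₁,x₂,x₃,h) = π(t₁x₁² + t₂x₂² + t₃x₃² + (t₁+t₂+t₃)h²), V₁(x₁,x₂,x₃,h) = (π/6)(x₃(3h²+x₃²) − x₁(3h²+x₁²)), and V₂(x₁,x₂,x₃,h) = (π/6)(x₂(3h²+x₂²) − x₃(3h²+x₃²)). If at a point (x₁,x₂,x₃,h) with h ≠ 0 there exist real numbers P₁, P₂ such that ∇E = P₁∇V₁ + P₂∇V₂, then the Young–Dupré force-balance equations hold: t₁(h²−x₁²)/(h²+x₁²) + t₂(h²−x₂²)/(h²+x₂²) + t₃(h²−x₃²)/(h²+x₃²) = 0 and t₁x₁/(h²+x₁²) + t₂x₂/(h²+x₂²) + t₃x₃/(h²+x₃²) = 0. -/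
/-- If at a point with `h ≠ 0` the gradient of the surface energy `E` is a linear
combination `P₁∇V₁ + P₂∇V₂` of the gradients of the volumes, then the Young–Dupré
force-balance equations hold. -/
theorem stmt_6 (t₁ t₂ t₃ : ℝ) (ht₁ : 0 < t₁) (ht₂ : 0 < t₂) (ht₃ : 0 < t₃)
    (x₁ x₂ x₃ h P₁ P₂ : ℝ) (hh : h ≠ 0)
    (hgrad :
      (![2 * Real.pi * t₁ * x₁, 2 * Real.pi * t₂ * x₂, 2 * Real.pi * t₃ * x₃,
          2 * Real.pi * (t₁ + t₂ + t₃) * h] : Fin 4 → ℝ) =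
        P₁ • ![-(Real.pi / 2) * (h ^ 2 + x₁ ^ 2), 0, (Real.pi / 2) * (h ^ 2 + x₃ ^ 2),
          Real.pi * h * (x₃ - x₁)] +
        P₂ • ![0, (Real.pi / 2) * (h ^ 2 + x₂ ^ 2), -(Real.pi / 2) * (h ^ 2 + x₃ ^ 2),
          Real.pi * h * (x₂ - x₃)]) :
    t₁ * (h ^ 2 - x₁ ^ 2) / (h ^ 2 + x₁ ^ 2) + t₂ * (h ^ 2 - x₂ ^ 2) / (h ^ 2 + x₂ ^ 2) +
      t₃ * (h ^ 2 - x₃ ^ 2) / (h ^ 2 + x₃ ^ 2) = 0 ∧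
    t₁ * x₁ / (h ^ 2 + x₁ ^ 2) + t₂ * x₂ / (h ^ 2 + x₂ ^ 2) +
      t₃ * x₃ / (h ^ 2 + x₃ ^ 2) = 0 := by
  have hpi : Real.pi ≠ 0 := Real.pi_ne_zero
  have e0 := congr_fun hgrad 0
  have e1 := congr_fun hgrad 1
  have e2 := congr_fun hgrad 2
  have e3 := congr_fun hgrad 3
  simp [Pi.add_apply, Pi.smul_apply, Matrix.cons_val_zero, Matrix.cons_val_one,
    Matrix.head_cons, smul_eq_mul, Fin.isValue, Matrix.cons_val_fin_one] at e0 e1 e2 e3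
  have h1 : 4 * (t₁ * x₁) = -(P₁ * (h ^ 2 + x₁ ^ 2)) :=
    mul_left_cancel₀ hpi (by linear_combination 2 * e0)
  have h2 : 4 * (t₂ * x₂) = P₂ * (h ^ 2 + x₂ ^ 2) :=
    mul_left_cancel₀ hpi (by linear_combination 2 * e1)
  have h3 : 4 * (t₃ * x₃) = (P₁ - P₂) * (h ^ 2 + x₃ ^ 2) :=
    mul_left_cancel₀ hpi (by linear_combination 2 * e2)
  have h4 : 2 * (t₁ + t₂ + t₃) = P₁ * (x₃ - x₁) + P₂ * (x₂ - x₃) :=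
    mul_left_cancel₀ (mul_ne_zero hpi hh) (by linear_combination e3)
  have d₁ : h ^ 2 + x₁ ^ 2 ≠ 0 := by positivity
  have d₂ : h ^ 2 + x₂ ^ 2 ≠ 0 := by positivity
  have d₃ : h ^ 2 + x₃ ^ 2 ≠ 0 := by positivity
  constructor
  · field_simp
    linear_combination (-(x₁/2)*(h^2+x₂^2)*(h^2+x₃^2)) * h1
      - (x₂/2)*(h^2+x₁^2)*(h^2+x₃^2) * h2
      - (x₃/2)*(h^2+x₁^2)*(h^2+x₂^2) * h3
      + ((h^2+x₁^2)*(h^2+x₂^2)*(h^2+x₃^2)/2) * h4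
  · field_simp
    linear_combination ((h^2+x₂^2)*(h^2+x₃^2)/4) * h1
      + ((h^2+x₁^2)*(h^2+x₃^2)/4) * h2
      + ((h^2+x₁^2)*(h^2+x₂^2)/4) * h3
end

section
/- Let t₁, t₂, t₃ > 0 and define E(x₁,x₂,x₃,h) = π(t₁x₁² + t₂x₂² + t₃x₃² + (t₁+t₂+t₃)h²), V₁(x₁,x₂,x₃,h) = (π/6)(x₃(3h²+x₃²) − x₁(3h²+x₁²)), and V₂(x₁,x₂,x₃,h) = (π/6)(x₂(3h²+x₂²) − x₃(3h²+x₃²)). If at a point (x₁,x₂,x₃,h) with h ≠ 0 there exist real numbers P₁, P₂ such that ∇E = P₁∇V₁ + P₂∇V₂, then the Lagrange multipliers are given by the Young–Laplace laws P₁ = −4t₁x₁/(h² + x₁²) and P₂ = 4t₂x₂/(h² + x₂²), and moreover P₁ − P₂ = 4t₃x₃/(h² + x₃²). -/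
/-- If at a point with `h ≠ 0` the gradient of the surface energy `E` is a linear
combination `P₁∇V₁ + P₂∇V₂`, then the Lagrange multipliers are the Young–Laplace
pressures, and `P₁ − P₂ = 4t₃x₃/(h² + x₃²)`. -/
theorem stmt_7 (t₁ t₂ t₃ : ℝ) (ht₁ : 0 < t₁) (ht₂ : 0 < t₂) (ht₃ : 0 < t₃)
    (x₁ x₂ x₃ h P₁ P₂ : ℝ) (hh : h ≠ 0)
    (hgrad :
      (![2 * Real.pi * t₁ * x₁, 2 * Real.pi * t₂ * x₂, 2 * Real.pi * t₃ * x₃,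
          2 * Real.pi * (t₁ + t₂ + t₃) * h] : Fin 4 → ℝ) =
        P₁ • ![-(Real.pi / 2) * (h ^ 2 + x₁ ^ 2), 0, (Real.pi / 2) * (h ^ 2 + x₃ ^ 2),
          Real.pi * h * (x₃ - x₁)] +
        P₂ • ![0, (Real.pi / 2) * (h ^ 2 + x₂ ^ 2), -(Real.pi / 2) * (h ^ 2 + x₃ ^ 2),
          Real.pi * h * (x₂ - x₃)]) :
    P₁ = -(4 * t₁ * x₁) / (h ^ 2 + x₁ ^ 2) ∧
    P₂ = 4 * t₂ * x₂ / (h ^ 2 + x₂ ^ 2) ∧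
    P₁ - P₂ = 4 * t₃ * x₃ / (h ^ 2 + x₃ ^ 2) := by

  have hpi := Real.pi_pos
  have h1 : (0:ℝ) < h ^ 2 + x₁ ^ 2 := by positivity
  have h2 : (0:ℝ) < h ^ 2 + x₂ ^ 2 := by positivity
  have h3 : (0:ℝ) < h ^ 2 + x₃ ^ 2 := by positivity
  have e0 := congrFun hgrad 0
  have e1 := congrFun hgrad 1
  have e2 := congrFun hgrad 2
  simp [Pi.add_apply, Pi.smul_apply, Matrix.cons_val_zero, Matrix.cons_val_one,
    Matrix.head_cons, smul_eq_mul] at e0 e1 e2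
  refine ⟨?_, ?_, ?_⟩
  · field_simp
    nlinarith [e0, hpi]
  · field_simp
    nlinarith [e1, hpi]
  · field_simp
    nlinarith [e2, hpi]
end

section
/- Let t₁, t₂, t₃ > 0 and let (x₁,x₂,x₃,h) ∈ ℝ⁴ with h ≠ 0 and x₁ < x₃ < x₂ satisfy the Young–Dupré equations t₁(h²−x₁²)/(h²+x₁²) + t₂(h²−x₂²)/(h²+x₂²) + t₃(h²−x₃²)/(h²+x₃²) = 0 and t₁x₁/(h²+x₁²) + t₂x₂/(h²+x₂²) + t₃x₃/(h²+x₃²) = 0. Then the surface tensions satisfy the strict triangle inequalities: t₁ < t₂ + t₃, t₂ < t₃ + t₁, and t₃ < t₁ + t₂ (equivalently, 2·max(t₁,t₂,t₃) < t₁ + t₂ + t₃). -/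
/-!
Put `u(x) = (h + x i)² / (h² + x²)`, a point of the unit circle. The two Young–Dupré equations are
the real and imaginary parts of `t₁ u(x₁) + t₂ u(x₂) + t₃ u(x₃) = 0`, and `u` is injective since
`h ≠ 0`. Hence `t₁ = ‖t₂ u(x₂) + t₃ u(x₃)‖`, and the triangle inequality is strict because the
distinct unit vectors `u(x₂)`, `u(x₃)` do not lie on a common ray; likewise for `t₂` and `t₃`.
-/

open Complex

theorem lt_add_of_smul_add_smul_add_smul_eq_zero {E : Type*} [NormedAddCommGroup E]
    [NormedSpace ℝ E] [StrictConvexSpace ℝ E] {u v w : E} (hu : ‖u‖ = 1) (hv : ‖v‖ = 1)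
    (hw : ‖w‖ = 1) (hvw : v ≠ w) {a b c : ℝ} (ha : 0 ≤ a) (hb : 0 < b) (hc : 0 < c)
    (hsum : a • u + b • v + c • w = 0) : a < b + c := by
  have hbv : b • v ≠ 0 := smul_ne_zero hb.ne' (norm_ne_zero_iff.mp (by simp [hv]))
  have hcw : c • w ≠ 0 := smul_ne_zero hc.ne' (norm_ne_zero_iff.mp (by simp [hw]))
  have hray : ¬SameRay ℝ (b • v) (c • w) := fun hray =>
    hvw <| (((SameRay.sameRay_pos_smul_right v hb).trans hray fun h => absurd h hbv).trans
      (SameRay.sameRay_pos_smul_left w hc) fun h => absurd h hcw).eq_of_norm_eq (hv.trans hw.symm)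
  calc a = ‖b • v + c • w‖ := by
        rw [eq_neg_of_add_eq_zero_right ((add_assoc _ _ _).symm.trans hsum), norm_neg, norm_smul,
          hu, mul_one, Real.norm_of_nonneg ha]
    _ < ‖b • v‖ + ‖c • w‖ := norm_add_lt_of_not_sameRay hray
    _ = b + c := by simp [norm_smul, hv, hw, abs_of_pos hb, abs_of_pos hc]

noncomputable def unitCirclePoint (h x : ℝ) : ℂ :=
  ⟨(h ^ 2 - x ^ 2) / (h ^ 2 + x ^ 2), 2 * h * x / (h ^ 2 + x ^ 2)⟩

theorem norm_unitCirclePoint {h : ℝ} (hh : h ≠ 0) (x : ℝ) : ‖unitCirclePoint h x‖ = 1 := by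
  have : h ^ 2 + x ^ 2 ≠ 0 := by positivity
  rw [norm_eq_sqrt_sq_add_sq, Real.sqrt_eq_one, unitCirclePoint]
  field_simp
  ring

theorem unitCirclePoint_injective {h : ℝ} (hh : h ≠ 0) :
    Function.Injective (unitCirclePoint h) := by
  intro x y hxy
  have dx : h ^ 2 + x ^ 2 ≠ 0 := by positivity
  have dy : h ^ 2 + y ^ 2 ≠ 0 := by positivity
  obtain ⟨hre, him⟩ := Complex.ext_iff.mp hxy
  simp only [unitCirclePoint] at hre him
  field_simp at hre
  have hden : h ^ 2 + x ^ 2 = h ^ 2 + y ^ 2 :=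
    mul_left_cancel₀ (pow_ne_zero 2 hh) (by linear_combination (-1 / 2 : ℝ) * hre)
  rw [hden] at him
  field_simp at him
  exact him

/-- At a point with `h ≠ 0` and `x₁ < x₃ < x₂` satisfying the Young–Dupré equations,
the surface tensions satisfy the strict triangle inequalities. -/
theorem stmt_8 (t₁ t₂ t₃ : ℝ) (ht₁ : 0 < t₁) (ht₂ : 0 < t₂) (ht₃ : 0 < t₃)
    (x₁ x₂ x₃ h : ℝ) (hh : h ≠ 0) (h₁₃ : x₁ < x₃) (h₃₂ : x₃ < x₂)
    (hcos : t₁ * (h ^ 2 - x₁ ^ 2) / (h ^ 2 + x₁ ^ 2) + t₂ * (h ^ 2 - x₂ ^ 2) / (h ^ 2 + x₂ ^ 2) +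
      t₃ * (h ^ 2 - x₃ ^ 2) / (h ^ 2 + x₃ ^ 2) = 0)
    (hsin : t₁ * x₁ / (h ^ 2 + x₁ ^ 2) + t₂ * x₂ / (h ^ 2 + x₂ ^ 2) +
      t₃ * x₃ / (h ^ 2 + x₃ ^ 2) = 0) :
    t₁ < t₂ + t₃ ∧ t₂ < t₃ + t₁ ∧ t₃ < t₁ + t₂ := by
  have hsum : t₁ • unitCirclePoint h x₁ + t₂ • unitCirclePoint h x₂ +
      t₃ • unitCirclePoint h x₃ = 0 := by
    apply Complex.ext
    · simp only [unitCirclePoint, add_re, real_smul, re_ofReal_mul, zero_re, ← mul_div_assoc]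
      exact hcos
    · simp only [unitCirclePoint, add_im, real_smul, im_ofReal_mul, zero_im]
      linear_combination 2 * h * hsin
  have hu := norm_unitCirclePoint hh
  have hinj := unitCirclePoint_injective hh
  refine ⟨?_, ?_, ?_⟩
  · exact lt_add_of_smul_add_smul_add_smul_eq_zero (hu x₁) (hu x₂) (hu x₃)
      (hinj.ne h₃₂.ne') ht₁.le ht₂ ht₃ hsum
  · exact lt_add_of_smul_add_smul_add_smul_eq_zero (hu x₂) (hu x₃) (hu x₁)
      (hinj.ne h₁₃.ne') ht₂.le ht₃ ht₁ (by rw [← hsum]; abel)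
  · exact lt_add_of_smul_add_smul_add_smul_eq_zero (hu x₃) (hu x₁) (hu x₂)
      (hinj.ne (h₁₃.trans h₃₂).ne) ht₃.le ht₁ ht₂ (by rw [← hsum]; abel)
end

section
/- Let t₁, t₂, t₃ > 0 and let (x₁,x₂,x₃,h) ∈ ℝ⁴ with h ≠ 0 satisfy the Young–Dupré equations t₁(h²−x₁²)/(h²+x₁²) + t₂(h²−x₂²)/(h²+x₂²) + t₃(h²−x₃²)/(h²+x₃²) = 0 and t₁x₁/(h²+x₁²) + t₂x₂/(h²+x₂²) + t₃x₃/(h²+x₃²) = 0. Define α_k = 2·arctan(x_k/|h|) for k = 1,2,3 and φ_k = α_{k+1} − α_{k−1} with indices taken mod 3. Then the law of cosines holds: cos φ_k = −(t_{k+1}² + t_{k−1}² − t_k²)/(2 t_{k+1} t_{k−1}) for each k ∈ {1,2,3}. -/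
/-!
Substituting `u = x_k/|h|` in the double-angle formulas `cos (2 arctan u) = (1 - u²)/(1 + u²)` and
`sin (2 arctan u) = 2u/(1 + u²)` turns the Young–Dupré equations into the force balance
`∑ t_k (cos α_k, sin α_k) = 0`. The three tensions then form a closed triangle, and expanding
`t₁² = |t₂ e^{iα₂} + t₃ e^{iα₃}|²` gives the law of cosines for `φ₁ = α₂ - α₃`; the other two
cases follow by cycling the indices.
-/

open Real

theorem Real.cos_two_mul_arctan (u : ℝ) : cos (2 * arctan u) = (1 - u ^ 2) / (1 + u ^ 2) := by
  rw [cos_two_mul, cos_sq_arctan]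
  field_simp
  ring

theorem Real.sin_two_mul_arctan (u : ℝ) : sin (2 * arctan u) = 2 * u / (1 + u ^ 2) := by
  rw [sin_two_mul, sin_arctan, cos_arctan, mul_assoc, div_mul_div_comm, mul_one,
    mul_self_sqrt (by positivity), mul_div_assoc]

theorem cos_two_mul_arctan_div_abs (x : ℝ) {h : ℝ} (hh : h ≠ 0) :
    cos (2 * arctan (x / |h|)) = (h ^ 2 - x ^ 2) / (h ^ 2 + x ^ 2) := by
  rw [cos_two_mul_arctan, div_pow, sq_abs]
  field_simp

theorem sin_two_mul_arctan_div_abs (x : ℝ) {h : ℝ} (hh : h ≠ 0) :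
    sin (2 * arctan (x / |h|)) = 2 * |h| * (x / (h ^ 2 + x ^ 2)) := by
  rw [sin_two_mul_arctan, div_pow, sq_abs]
  field_simp
  rw [sq_abs]

theorem cos_sub_eq_of_weighted_sum_eq_zero {t₁ t₂ t₃ α₁ α₂ α₃ : ℝ} (ht₂ : t₂ ≠ 0) (ht₃ : t₃ ≠ 0)
    (hc : t₁ * cos α₁ + t₂ * cos α₂ + t₃ * cos α₃ = 0)
    (hs : t₁ * sin α₁ + t₂ * sin α₂ + t₃ * sin α₃ = 0) :
    cos (α₂ - α₃) = -((t₂ ^ 2 + t₃ ^ 2 - t₁ ^ 2) / (2 * t₂ * t₃)) := by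
  have hclosed : t₁ ^ 2 = t₂ ^ 2 + t₃ ^ 2 + 2 * t₂ * t₃ * cos (α₂ - α₃) := by
    rw [cos_sub]
    linear_combination (-t₁ ^ 2) * sin_sq_add_cos_sq α₁ + t₂ ^ 2 * sin_sq_add_cos_sq α₂
      + t₃ ^ 2 * sin_sq_add_cos_sq α₃ + (t₁ * cos α₁ - t₂ * cos α₂ - t₃ * cos α₃) * hc
      + (t₁ * sin α₁ - t₂ * sin α₂ - t₃ * sin α₃) * hs
  rw [← neg_div, eq_div_iff (by positivity)]
  linear_combination -hclosed

/-- At a point with `h ≠ 0` satisfying the Young–Dupré equations, with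
`α_k = 2 arctan(x_k/|h|)` and `φ_k = α_{k+1} − α_{k−1}` (indices mod 3),
the law of cosines holds for each `k ∈ {1,2,3}`. -/
theorem stmt_9 (t₁ t₂ t₃ : ℝ) (ht₁ : 0 < t₁) (ht₂ : 0 < t₂) (ht₃ : 0 < t₃)
    (x₁ x₂ x₃ h : ℝ) (hh : h ≠ 0)
    (hcos : t₁ * (h ^ 2 - x₁ ^ 2) / (h ^ 2 + x₁ ^ 2) + t₂ * (h ^ 2 - x₂ ^ 2) / (h ^ 2 + x₂ ^ 2) +
      t₃ * (h ^ 2 - x₃ ^ 2) / (h ^ 2 + x₃ ^ 2) = 0)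
    (hsin : t₁ * x₁ / (h ^ 2 + x₁ ^ 2) + t₂ * x₂ / (h ^ 2 + x₂ ^ 2) +
      t₃ * x₃ / (h ^ 2 + x₃ ^ 2) = 0)
    (α₁ α₂ α₃ φ₁ φ₂ φ₃ : ℝ)
    (hα₁ : α₁ = 2 * Real.arctan (x₁ / |h|))
    (hα₂ : α₂ = 2 * Real.arctan (x₂ / |h|))
    (hα₃ : α₃ = 2 * Real.arctan (x₃ / |h|))
    (hφ₁ : φ₁ = α₂ - α₃) (hφ₂ : φ₂ = α₃ - α₁) (hφ₃ : φ₃ = α₁ - α₂) :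
    Real.cos φ₁ = -((t₂ ^ 2 + t₃ ^ 2 - t₁ ^ 2) / (2 * t₂ * t₃)) ∧
    Real.cos φ₂ = -((t₃ ^ 2 + t₁ ^ 2 - t₂ ^ 2) / (2 * t₃ * t₁)) ∧
    Real.cos φ₃ = -((t₁ ^ 2 + t₂ ^ 2 - t₃ ^ 2) / (2 * t₁ * t₂)) := by
  have hc : t₁ * cos α₁ + t₂ * cos α₂ + t₃ * cos α₃ = 0 := by
    simp only [hα₁, hα₂, hα₃, cos_two_mul_arctan_div_abs _ hh]
    rw [← hcos]
    ring
  have hs : t₁ * sin α₁ + t₂ * sin α₂ + t₃ * sin α₃ = 0 := by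
    simp only [hα₁, hα₂, hα₃, sin_two_mul_arctan_div_abs _ hh]
    linear_combination 2 * |h| * hsin
  subst hφ₁ hφ₂ hφ₃
  exact ⟨cos_sub_eq_of_weighted_sum_eq_zero ht₂.ne' ht₃.ne' hc hs,
    cos_sub_eq_of_weighted_sum_eq_zero (α₁ := α₂) ht₃.ne' ht₁.ne' (by linear_combination hc)
      (by linear_combination hs),
    cos_sub_eq_of_weighted_sum_eq_zero (α₁ := α₃) ht₁.ne' ht₂.ne' (by linear_combination hc)
      (by linear_combination hs)⟩
end

section
/- Let t₁, t₂, t₃ > 0 satisfy the strict triangle inequalities 2·max(t₁,t₂,t₃) < t₁ + t₂ + t₃, and let w₁, w₂ > 0. Then there exists exactly one quadruple (x₁,x₂,x₃,h) ∈ ℝ⁴ with h > 0 satisfying the system: t₁(h²−x₁²)/(h²+x₁²) + t₂(h²−x₂²)/(h²+x₂²) + t₃(h²−x₃²)/(h²+x₃²) = 0, t₁x₁/(h²+x₁²) + t₂x₂/(h²+x₂²) + t₃x₃/(h²+x₃²) = 0, −x₁(3h²+x₁²) + x₃(3h²+x₃²) = w₁, and x₂(3h²+x₂²) − x₃(3h²+x₃²)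 = w₂. -/
/-!
With `x_k = h tan (θ_k / 2)` the force balance says that the vectors `t_k e^{iθ_k}` sum to zero,
and the volume constraints become `h³ (V θ₃ - V θ₁) = w₁`, `h³ (V θ₂ - V θ₃) = w₂` with
`V θ = tan³ (θ/2) + 3 tan (θ/2)`. Positive volumes order the angles `θ₁ < θ₃ < θ₂`, and then
the force balance fixes the gaps `θ₃ - θ₁ = β`, `θ₂ - θ₃ = γ` to the exterior angles of the
triangle with sides `t₁, t₂, t₃`. Only a rotation `φ = θ₁` and the scale `h` remain. Since
`V'' / V' = tan (θ/2)` is increasing, Cauchy's mean value theorem makes the volume ratio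
`(V (φ + β) - V φ) / (V (φ + β + γ) - V (φ + β))` strictly decreasing, from `+∞` to `0`, so it
takes the value `w₁ / w₂` exactly once; `h` is then a cube root.
-/

open Real Set Filter Topology

theorem ContinuousOn.exists_mem_Ioo_eq_of_eventually {α δ : Type*}
    [ConditionallyCompleteLinearOrder α] [TopologicalSpace α] [OrderTopology α]
    [DenselyOrdered α] [LinearOrder δ] [TopologicalSpace δ] [OrderClosedTopology δ]
    {f : α → δ} {a b : α} {c : δ} (hab : a < b) (hf : ContinuousOn f (Ioo a b))
    (ha : ∀ᶠ x in 𝓝[>] a, c < f x) (hb : ∀ᶠ x in 𝓝[<] b, f x < c) :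
    ∃ x ∈ Ioo a b, f x = c := by
  have := nhdsLT_neBot_of_exists_lt ⟨a, hab⟩
  obtain ⟨x₁, hfx₁, hx₁⟩ := (hb.and (Ioo_mem_nhdsLT hab)).exists
  have := nhdsGT_neBot_of_exists_gt ⟨x₁, hx₁.1⟩
  obtain ⟨x₀, hfx₀, hx₀⟩ := (ha.and (Ioo_mem_nhdsGT hx₁.1)).exists
  obtain ⟨x, hx, hfx⟩ := intermediate_value_Icc' hx₀.2.le
    (hf.mono (Icc_subset_Ioo hx₀.1 hx₁.2)) ⟨hfx₁.le, hfx₀.le⟩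
  exact ⟨x, Icc_subset_Ioo hx₀.1 hx₁.2 hx, hfx⟩

/-- The slopes of `g` against `f` increase, i.e. `g ∘ f⁻¹` is strictly convex. -/
theorem sub_mul_sub_lt_of_hasDerivAt_eq_mul {f g f' g' ρ : ℝ → ℝ} {a b c : ℝ}
    (hab : a < b) (hbc : b < c) (hf : ∀ x ∈ Icc a c, HasDerivAt f (f' x) x)
    (hg : ∀ x ∈ Icc a c, HasDerivAt g (g' x) x) (hf' : ∀ x ∈ Ioo a c, 0 < f' x)
    (hg' : ∀ x ∈ Ioo a c, g' x = ρ x * f' x) (hρ : StrictMonoOn ρ (Ioo a c)) :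
    (g b - g a) * (f c - f b) < (g c - g b) * (f b - f a) := by
  have slope : ∀ p q, a ≤ p → p < q → q ≤ c →
      ∃ ξ ∈ Ioo p q, g q - g p = ρ ξ * (f q - f p) ∧ 0 < f q - f p := by
    intro p q hap hpq hqc
    have hsub : Icc p q ⊆ Icc a c := Icc_subset_Icc hap hqc
    have hsub' : Ioo p q ⊆ Ioo a c := Ioo_subset_Ioo hap hqc
    have hfc : ContinuousOn f (Icc p q) :=
      fun x hx => (hf x (hsub hx)).continuousAt.continuousWithinAt
    have hgc : ContinuousOn g (Icc p q) :=
      fun x hx => (hg x (hsub hx)).continuousAt.continuousWithinAt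
    obtain ⟨ξ, hξ, hcauchy⟩ := exists_ratio_hasDerivAt_eq_ratio_slope f f' hpq hfc
      (fun x hx => hf x (hsub (Ioo_subset_Icc_self hx))) g g' hgc
      (fun x hx => hg x (hsub (Ioo_subset_Icc_self hx)))
    obtain ⟨η, hη, hmvt⟩ := exists_hasDerivAt_eq_slope f f' hpq hfc
      (fun x hx => hf x (hsub (Ioo_subset_Icc_self hx)))
    have hfξ := hf' ξ (hsub' hξ)
    refine ⟨ξ, hξ, ?_, ?_⟩
    · rw [hg' ξ (hsub' hξ)] at hcauchy
      exact mul_right_cancel₀ hfξ.ne' (by linear_combination hcauchy)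
    · have := hf' η (hsub' hη)
      rw [hmvt] at this
      exact (div_pos_iff_of_pos_right (sub_pos.2 hpq)).1 this
  obtain ⟨ξ₁, hξ₁, hg₁, hf₁⟩ := slope a b le_rfl hab hbc.le
  obtain ⟨ξ₂, hξ₂, hg₂, hf₂⟩ := slope b c hab.le hbc le_rfl
  have hρξ : ρ ξ₁ < ρ ξ₂ :=
    hρ ⟨hξ₁.1, hξ₁.2.trans hbc⟩ ⟨hab.trans hξ₂.1, hξ₂.2⟩ (hξ₁.2.trans hξ₂.1)
  rw [hg₁, hg₂]
  nlinarith [mul_pos hf₁ hf₂]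

lemma pi_le_of_sin_nonpos {x : ℝ} (hx : 0 < x) (hs : sin x ≤ 0) : π ≤ x := by
  by_contra! hlt
  exact (sin_pos_of_pos_of_lt_pi hx hlt).not_ge hs

lemma sin_nonpos_of_pi_le {x : ℝ} (hπ : π ≤ x) (hx : x ≤ 2 * π) : sin x ≤ 0 := by
  rw [← sin_sub_two_pi]
  exact sin_nonpos_of_nonpos_of_neg_pi_le (by linarith) (by linarith)

/-- `x (3 h² + x²)` is `6 / π` times the volume of the spherical cap of height `x` over a disc of
radius `h`; for `x = h tan (θ / 2)` it equals `h³ capVolume θ`. -/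
noncomputable def capVolume (θ : ℝ) : ℝ := tan (θ / 2) ^ 3 + 3 * tan (θ / 2)

noncomputable def capVolumeDeriv (θ : ℝ) : ℝ := 3 / 2 * (1 + tan (θ / 2) ^ 2) ^ 2

lemma cos_half_pos {θ : ℝ} (hθ : θ ∈ Ioo (-π) π) : 0 < cos (θ / 2) :=
  cos_pos_of_mem_Ioo ⟨by linarith [hθ.1], by linarith [hθ.2]⟩

lemma hasDerivAt_tan_half {θ : ℝ} (hθ : θ ∈ Ioo (-π) π) :
    HasDerivAt (fun x => tan (x / 2)) ((1 + tan (θ / 2) ^ 2) / 2) θ := by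
  have hcos := (cos_half_pos hθ).ne'
  refine ((hasDerivAt_tan hcos).comp θ ((hasDerivAt_id θ).div_const 2)).congr_deriv ?_
  rw [one_div, ← inv_one_add_tan_sq hcos, inv_inv]
  ring

lemma hasDerivAt_capVolume {θ : ℝ} (hθ : θ ∈ Ioo (-π) π) :
    HasDerivAt capVolume (capVolumeDeriv θ) θ := by
  refine (((hasDerivAt_tan_half hθ).pow 3).add
    ((hasDerivAt_tan_half hθ).const_mul 3)).congr_deriv ?_
  unfold capVolumeDeriv; ring

lemma hasDerivAt_capVolumeDeriv {θ : ℝ} (hθ : θ ∈ Ioo (-π) π) :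
    HasDerivAt capVolumeDeriv (2 * tan (θ / 2) * capVolumeDeriv θ) θ := by
  refine ((((hasDerivAt_tan_half hθ).pow 2).const_add 1 |>.pow 2).const_mul
    (3 / 2 : ℝ)).congr_deriv ?_
  simp only [capVolumeDeriv, Pi.pow_apply]; ring

lemma capVolumeDeriv_pos (θ : ℝ) : 0 < capVolumeDeriv θ := by
  unfold capVolumeDeriv; positivity

lemma strictMonoOn_tan_half : StrictMonoOn (fun θ => tan (θ / 2)) (Ioo (-π) π) :=
  fun a ha b hb hab => strictMonoOn_tan ⟨by linarith [ha.1], by linarith [ha.2]⟩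
    ⟨by linarith [hb.1], by linarith [hb.2]⟩ (by linarith)

lemma strictMonoOn_capVolume : StrictMonoOn capVolume (Ioo (-π) π) := by
  have hcubic : StrictMono fun u : ℝ => u ^ 3 + 3 * u :=
    (Odd.strictMono_pow (by decide)).add (strictMono_mul_left_of_pos three_pos)
  exact hcubic.comp_strictMonoOn strictMonoOn_tan_half

lemma tendsto_capVolume_nhdsLT_pi : Tendsto capVolume (𝓝[<] π) atTop := by
  have hhalf : Tendsto (fun θ : ℝ => θ / 2) (𝓝[<] π) (𝓝[<] (π / 2)) :=
    (continuous_id.div_const 2).continuousWithinAt.tendsto_nhdsWithin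
      fun x (hx : x < π) => show x / 2 < π / 2 by linarith
  have htan := tendsto_tan_pi_div_two.comp hhalf
  exact ((tendsto_pow_atTop three_ne_zero).comp htan).atTop_add_atTop
    (htan.const_mul_atTop three_pos)

lemma capVolume_neg (θ : ℝ) : capVolume (-θ) = -capVolume θ := by
  simp only [capVolume, neg_div, tan_neg]; ring

lemma tendsto_capVolume_nhdsGT_neg_pi : Tendsto capVolume (𝓝[>] (-π)) atBot := by
  have := tendsto_neg_atTop_atBot.comp (tendsto_capVolume_nhdsLT_pi.comp tendsto_neg_nhdsGT_neg)
  simpa [Function.comp_def, capVolume_neg] using this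

lemma capVolumeDeriv_sub_mul_lt {a b c : ℝ} (ha : -π < a) (hab : a < b) (hbc : b < c)
    (hc : c < π) :
    (capVolumeDeriv b - capVolumeDeriv a) * (capVolume c - capVolume b) <
      (capVolumeDeriv c - capVolumeDeriv b) * (capVolume b - capVolume a) := by
  have hsub : Icc a c ⊆ Ioo (-π) π := Icc_subset_Ioo ha hc
  refine sub_mul_sub_lt_of_hasDerivAt_eq_mul (ρ := fun θ => 2 * tan (θ / 2)) hab hbc
    (fun x hx => hasDerivAt_capVolume (hsub hx))
    (fun x hx => hasDerivAt_capVolumeDeriv (hsub hx))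
    (fun x _ => capVolumeDeriv_pos x) (fun x _ => rfl) ?_
  exact (strictMono_mul_left_of_pos two_pos).comp_strictMonoOn
    (strictMonoOn_tan_half.mono (Ioo_subset_Icc_self.trans hsub))

lemma lt_of_pow_mul_capVolume_sub_eq {k θ θ' w : ℝ} (hk : 0 < k) (hθ : θ ∈ Ioo (-π) π)
    (hθ' : θ' ∈ Ioo (-π) π) (hw : 0 < w) (h : k ^ 3 * (capVolume θ' - capVolume θ) = w) :
    θ < θ' :=
  (strictMonoOn_capVolume.lt_iff_lt hθ hθ').1 <|
    sub_pos.1 (pos_of_mul_pos_right (h ▸ hw) (by positivity))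

lemma tendsto_capVolume_add_const {x c : ℝ} (h : x + c ∈ Ioo (-π) π) :
    Tendsto (fun φ => capVolume (φ + c)) (𝓝 x) (𝓝 (capVolume (x + c))) :=
  (hasDerivAt_capVolume h).continuousAt.tendsto.comp (tendsto_id.add_const c)

noncomputable def capVolumeRatio (β γ φ : ℝ) : ℝ :=
  (capVolume (φ + β) - capVolume φ) / (capVolume (φ + β + γ) - capVolume (φ + β))

section capVolumeRatio

variable {β γ : ℝ} (hβ : 0 < β) (hγ : 0 < γ)

include hβ hγ

lemma capVolume_sub_pos_of_mem_Ioo {φ : ℝ} (hφ : φ ∈ Ioo (-π) (π - β - γ)) :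
    0 < capVolume (φ + β) - capVolume φ ∧ 0 < capVolume (φ + β + γ) - capVolume (φ + β) := by
  obtain ⟨h₁, h₂⟩ := hφ
  exact ⟨sub_pos.2 (strictMonoOn_capVolume ⟨h₁, by linarith⟩ ⟨by linarith, by linarith⟩
      (by linarith)),
    sub_pos.2 (strictMonoOn_capVolume ⟨by linarith, by linarith⟩ ⟨by linarith, by linarith⟩
      (by linarith))⟩

lemma hasDerivAt_capVolumeRatio {φ : ℝ} (hφ : φ ∈ Ioo (-π) (π - β - γ)) :
    HasDerivAt (capVolumeRatio β γ)
      (((capVolumeDeriv (φ + β) - capVolumeDeriv φ) *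
          (capVolume (φ + β + γ) - capVolume (φ + β)) -
        (capVolume (φ + β) - capVolume φ) *
          (capVolumeDeriv (φ + β + γ) - capVolumeDeriv (φ + β))) /
        (capVolume (φ + β + γ) - capVolume (φ + β)) ^ 2) φ := by
  have hV : ∀ c, φ + c ∈ Ioo (-π) π →
      HasDerivAt (fun x => capVolume (x + c)) (capVolumeDeriv (φ + c)) φ :=
    fun c hc => (hasDerivAt_capVolume hc).comp_add_const φ c
  have h₁ := hV β ⟨by linarith [hφ.1], by linarith [hφ.2]⟩
  have h₂ := hV (β + γ) ⟨by linarith [hφ.1], by linarith [hφ.2]⟩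
  have h₀ := hasDerivAt_capVolume (⟨hφ.1, by linarith [hφ.2]⟩ : φ ∈ Ioo (-π) π)
  simp only [← add_assoc] at h₂
  exact (h₁.sub h₀).div (h₂.sub h₁) (capVolume_sub_pos_of_mem_Ioo hβ hγ hφ).2.ne'

lemma strictAntiOn_capVolumeRatio :
    StrictAntiOn (capVolumeRatio β γ) (Ioo (-π) (π - β - γ)) := by
  refine strictAntiOn_of_hasDerivWithinAt_neg (convex_Ioo _ _)
    (fun φ hφ => (hasDerivAt_capVolumeRatio hβ hγ hφ).continuousAt.continuousWithinAt)
    (fun φ hφ => (hasDerivAt_capVolumeRatio hβ hγ (interior_subset hφ)).hasDerivWithinAt)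
    fun φ hφ => ?_
  rw [interior_Ioo] at hφ
  have := capVolumeDeriv_sub_mul_lt (b := φ + β) (c := φ + β + γ) hφ.1 (by linarith)
    (by linarith) (by linarith [hφ.2])
  exact div_neg_of_neg_of_pos (by linarith)
    (pow_pos (capVolume_sub_pos_of_mem_Ioo hβ hγ hφ).2 2)

variable (hβγ : β + γ < 2 * π)
include hβγ

lemma tendsto_capVolumeRatio_nhdsGT_neg_pi :
    Tendsto (capVolumeRatio β γ) (𝓝[>] (-π)) atTop := by
  have hβ' : -π + β ∈ Ioo (-π) π := ⟨by linarith, by linarith⟩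
  have hβγ' : -π + (β + γ) ∈ Ioo (-π) π := ⟨by linarith, by linarith⟩
  have hgap : 0 < capVolume (-π + (β + γ)) - capVolume (-π + β) :=
    sub_pos.2 (strictMonoOn_capVolume hβ' hβγ' (by linarith))
  have hnum : Tendsto (fun φ => -capVolume φ + capVolume (φ + β)) (𝓝[>] (-π)) atTop :=
    (tendsto_neg_atBot_atTop.comp tendsto_capVolume_nhdsGT_neg_pi).atTop_add
      ((tendsto_capVolume_add_const hβ').mono_left nhdsWithin_le_nhds)
  have hden : Tendsto (fun φ => (capVolume (φ + (β + γ)) - capVolume (φ + β))⁻¹) (𝓝[>] (-π))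
      (𝓝 (capVolume (-π + (β + γ)) - capVolume (-π + β))⁻¹) :=
    (((tendsto_capVolume_add_const hβγ').sub (tendsto_capVolume_add_const hβ')).inv₀
      hgap.ne').mono_left nhdsWithin_le_nhds
  refine (hnum.atTop_mul_pos (inv_pos.2 hgap) hden).congr fun φ => ?_
  simp only [capVolumeRatio, add_assoc]
  ring

lemma tendsto_capVolumeRatio_nhdsLT :
    Tendsto (capVolumeRatio β γ) (𝓝[<] (π - β - γ)) (𝓝 0) := by
  have hL : π - β - γ ∈ Ioo (-π) π := ⟨by linarith, by linarith⟩
  have hLβ : π - β - γ + β ∈ Ioo (-π) π := ⟨by linarith, by linarith⟩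
  have hshift : Tendsto (fun φ => φ + (β + γ)) (𝓝[<] (π - β - γ)) (𝓝[<] π) := by
    have h := ((continuous_add_const (β + γ)).tendsto (π - β - γ)).inf
      (tendsto_principal_principal.2 fun x (hx : x < π - β - γ) =>
        (show x + (β + γ) ∈ Iio π from mem_Iio.2 (by linarith)))
    rwa [show π - β - γ + (β + γ) = π by ring] at h
  have hnum : Tendsto (fun φ => capVolume (φ + β) - capVolume φ) (𝓝[<] (π - β - γ))
      (𝓝 (capVolume (π - β - γ + β) - capVolume (π - β - γ))) :=
    ((tendsto_capVolume_add_const hLβ).sub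
      (hasDerivAt_capVolume hL).continuousAt.tendsto).mono_left nhdsWithin_le_nhds
  have hden : Tendsto (fun φ => capVolume (φ + (β + γ)) + -capVolume (φ + β))
      (𝓝[<] (π - β - γ)) atTop :=
    (tendsto_capVolume_nhdsLT_pi.comp hshift).atTop_add
      ((tendsto_capVolume_add_const hLβ).neg.mono_left nhdsWithin_le_nhds)
  simpa only [zero_div] using (hnum.div_atTop hden).congr fun φ => by
    simp only [capVolumeRatio, add_assoc, ← sub_eq_add_neg]

theorem existsUnique_capVolume_eq {w₁ w₂ : ℝ} (hw₁ : 0 < w₁) (hw₂ : 0 < w₂) :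
    ∃! q : ℝ × ℝ, q.1 ∈ Ioo (-π) (π - β - γ) ∧ 0 < q.2 ∧
      q.2 ^ 3 * (capVolume (q.1 + β) - capVolume q.1) = w₁ ∧
      q.2 ^ 3 * (capVolume (q.1 + β + γ) - capVolume (q.1 + β)) = w₂ := by
  obtain ⟨φ, hφ, hratio⟩ := ContinuousOn.exists_mem_Ioo_eq_of_eventually (c := w₁ / w₂)
    (by linarith)
    (fun φ hφ => (hasDerivAt_capVolumeRatio hβ hγ hφ).continuousAt.continuousWithinAt)
    ((tendsto_capVolumeRatio_nhdsGT_neg_pi hβ hγ hβγ).eventually_gt_atTop _)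
    ((tendsto_capVolumeRatio_nhdsLT hβ hγ hβγ).eventually (eventually_lt_nhds (by positivity)))
  obtain ⟨hF, hG⟩ := capVolume_sub_pos_of_mem_Ioo hβ hγ hφ
  set F := capVolume (φ + β) - capVolume φ
  set G := capVolume (φ + β + γ) - capVolume (φ + β)
  have hratio' : F * w₂ = w₁ * G := by
    rwa [capVolumeRatio, div_eq_div_iff hG.ne' hw₂.ne'] at hratio
  set h := (w₁ / F) ^ (3⁻¹ : ℝ)
  have hcube : h ^ 3 = w₁ / F := rpow_inv_natCast_pow (div_pos hw₁ hF).le three_ne_zero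
  refine ⟨(φ, h), ⟨hφ, by positivity, ?_, ?_⟩, ?_⟩
  · show h ^ 3 * F = w₁
    rw [hcube, div_mul_cancel₀ _ hF.ne']
  · show h ^ 3 * G = w₂
    rw [hcube, div_mul_eq_mul_div, div_eq_iff hF.ne']
    linarith
  rintro ⟨ψ, k⟩ ⟨hψ, hk, hk₁, hk₂⟩
  dsimp only at hψ hk hk₁ hk₂
  have hψφ : ψ = φ := by
    refine strictAntiOn_capVolumeRatio hβ hγ |>.injOn hψ hφ ?_
    rw [hratio, capVolumeRatio, ← hk₁, ← hk₂, mul_div_mul_left _ _ (by positivity)]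
  subst hψφ
  have hkh : k ^ 3 = h ^ 3 := by rw [hcube, eq_div_iff hF.ne', hk₁]
  rw [pow_left_inj₀ hk.le (by positivity) three_ne_zero] at hkh
  rw [hkh]

end capVolumeRatio

def ForceBalance (t₁ t₂ t₃ θ₁ θ₂ θ₃ : ℝ) : Prop :=
  t₁ * cos θ₁ + t₂ * cos θ₂ + t₃ * cos θ₃ = 0 ∧ t₁ * sin θ₁ + t₂ * sin θ₂ + t₃ * sin θ₃ = 0

namespace ForceBalance

variable {t₁ t₂ t₃ θ₁ θ₂ θ₃ : ℝ}

lemma const_add (h : ForceBalance t₁ t₂ t₃ θ₁ θ₂ θ₃) (φ : ℝ) :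
    ForceBalance t₁ t₂ t₃ (φ + θ₁) (φ + θ₂) (φ + θ₃) := by
  simp only [ForceBalance, add_comm φ, cos_add, sin_add]
  exact ⟨by linear_combination cos φ * h.1 - sin φ * h.2,
    by linear_combination sin φ * h.1 + cos φ * h.2⟩

lemma mul_cos_sub₁₃ (h : ForceBalance t₁ t₂ t₃ θ₁ θ₂ θ₃) :
    2 * t₁ * t₃ * cos (θ₃ - θ₁) = t₂ ^ 2 - t₁ ^ 2 - t₃ ^ 2 := by
  rw [cos_sub]
  linear_combination (t₁ * cos θ₁ + t₃ * cos θ₃ - t₂ * cos θ₂) * h.1 +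
    (t₁ * sin θ₁ + t₃ * sin θ₃ - t₂ * sin θ₂) * h.2 - t₁ ^ 2 * sin_sq_add_cos_sq θ₁ -
    t₃ ^ 2 * sin_sq_add_cos_sq θ₃ + t₂ ^ 2 * sin_sq_add_cos_sq θ₂

lemma mul_cos_sub₃₂ (h : ForceBalance t₁ t₂ t₃ θ₁ θ₂ θ₃) :
    2 * t₂ * t₃ * cos (θ₂ - θ₃) = t₁ ^ 2 - t₂ ^ 2 - t₃ ^ 2 := by
  rw [cos_sub]
  linear_combination (t₂ * cos θ₂ + t₃ * cos θ₃ - t₁ * cos θ₁) * h.1 +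
    (t₂ * sin θ₂ + t₃ * sin θ₃ - t₁ * sin θ₁) * h.2 - t₂ ^ 2 * sin_sq_add_cos_sq θ₂ -
    t₃ ^ 2 * sin_sq_add_cos_sq θ₃ + t₁ ^ 2 * sin_sq_add_cos_sq θ₁

lemma mul_sin_sub (h : ForceBalance t₁ t₂ t₃ θ₁ θ₂ θ₃) :
    t₁ * sin (θ₃ - θ₁) = t₂ * sin (θ₂ - θ₃) := by
  rw [sin_sub, sin_sub]
  linear_combination sin θ₃ * h.1 - cos θ₃ * h.2

lemma sub_lt_pi (h : ForceBalance t₁ t₂ t₃ θ₁ θ₂ θ₃) (ht₁ : 0 < t₁) (ht₂ : 0 < t₂)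
    (h₁₃ : θ₁ < θ₃) (h₃₂ : θ₃ < θ₂) (h₂₁ : θ₂ < θ₁ + 2 * π) :
    θ₃ - θ₁ < π ∧ θ₂ - θ₃ < π := by
  have hsin := h.mul_sin_sub
  constructor <;> by_contra! hπ
  · have := sin_nonpos_of_pi_le hπ (by linarith)
    have := pi_le_of_sin_nonpos (x := θ₂ - θ₃) (by linarith) (by nlinarith)
    linarith
  · have := sin_nonpos_of_pi_le hπ (by linarith)
    have := pi_le_of_sin_nonpos (x := θ₃ - θ₁) (by linarith) (by nlinarith)
    linarith

theorem sub_eq_sub {θ₁' θ₂' θ₃' : ℝ} (h : ForceBalance t₁ t₂ t₃ θ₁ θ₂ θ₃)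
    (h' : ForceBalance t₁ t₂ t₃ θ₁' θ₂' θ₃') (ht₁ : 0 < t₁) (ht₂ : 0 < t₂) (ht₃ : 0 < t₃)
    (h₁₃ : θ₁ < θ₃) (h₃₂ : θ₃ < θ₂) (h₂₁ : θ₂ < θ₁ + 2 * π)
    (h₁₃' : θ₁' < θ₃') (h₃₂' : θ₃' < θ₂') (h₂₁' : θ₂' < θ₁' + 2 * π) :
    θ₃ - θ₁ = θ₃' - θ₁' ∧ θ₂ - θ₃ = θ₂' - θ₃' := by
  obtain ⟨hπ₁, hπ₂⟩ := h.sub_lt_pi ht₁ ht₂ h₁₃ h₃₂ h₂₁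
  obtain ⟨hπ₁', hπ₂'⟩ := h'.sub_lt_pi ht₁ ht₂ h₁₃' h₃₂' h₂₁'
  constructor
  · refine injOn_cos ⟨by linarith, hπ₁.le⟩ ⟨by linarith, hπ₁'.le⟩ ?_
    exact mul_left_cancel₀ (by positivity) (h.mul_cos_sub₁₃.trans h'.mul_cos_sub₁₃.symm)
  · refine injOn_cos ⟨by linarith, hπ₂.le⟩ ⟨by linarith, hπ₂'.le⟩ ?_
    exact mul_left_cancel₀ (by positivity) (h.mul_cos_sub₃₂.trans h'.mul_cos_sub₃₂.symm)

end ForceBalance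

lemma lt_add_of_two_mul_max_lt {t₁ t₂ t₃ : ℝ} (h : 2 * max (max t₁ t₂) t₃ < t₁ + t₂ + t₃) :
    t₁ < t₂ + t₃ ∧ t₂ < t₁ + t₃ ∧ t₃ < t₁ + t₂ := by
  have := le_max_left (max t₁ t₂) t₃
  have := le_max_right (max t₁ t₂) t₃
  refine ⟨?_, ?_, ?_⟩ <;> linarith [le_max_left t₁ t₂, le_max_right t₁ t₂]

theorem exists_forceBalance {t₁ t₂ t₃ : ℝ} (ht₁ : 0 < t₁) (ht₂ : 0 < t₂) (ht₃ : 0 < t₃)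
    (h₁ : t₁ < t₂ + t₃) (h₂ : t₂ < t₁ + t₃) (h₃ : t₃ < t₁ + t₂) :
    ∃ β γ, 0 < β ∧ 0 < γ ∧ β + γ < 2 * π ∧ ForceBalance t₁ t₂ t₃ 0 (β + γ) β := by
  obtain ⟨a, ha⟩ : ∃ a, a = (t₂ ^ 2 - t₁ ^ 2 - t₃ ^ 2) / (2 * t₁ * t₃) := ⟨_, rfl⟩
  obtain ⟨b, hb⟩ : ∃ b, b = (t₁ ^ 2 - t₂ ^ 2 - t₃ ^ 2) / (2 * t₂ * t₃) := ⟨_, rfl⟩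
  have ha₁ : -1 < a := by rw [ha, lt_div_iff₀ (by positivity)]; nlinarith
  have ha₂ : a < 1 := by rw [ha, div_lt_iff₀ (by positivity)]; nlinarith
  have hb₁ : -1 < b := by rw [hb, lt_div_iff₀ (by positivity)]; nlinarith
  have hb₂ : b < 1 := by rw [hb, div_lt_iff₀ (by positivity)]; nlinarith
  have hcosβ := cos_arccos ha₁.le ha₂.le
  have hcosγ := cos_arccos hb₁.le hb₂.le
  have hsinβ := sin_pos_of_pos_of_lt_pi (arccos_pos.2 ha₂) (arccos_lt_pi.2 ha₁)
  have hsinγ := sin_pos_of_pos_of_lt_pi (arccos_pos.2 hb₂) (arccos_lt_pi.2 hb₁)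
  have hpyth : sin (arccos a) ^ 2 + a ^ 2 = 1 := by
    rw [← sin_sq_add_cos_sq (arccos a), hcosβ]
  have hsum : t₁ * a + t₂ * b + t₃ = 0 := by rw [ha, hb]; field_simp; ring
  -- the law of sines, obtained by comparing squares
  have hsines : t₁ * sin (arccos a) = t₂ * sin (arccos b) := by
    refine (pow_left_inj₀ (by positivity) (by positivity) two_ne_zero).1 ?_
    rw [mul_pow, mul_pow, sin_sq, sin_sq, hcosβ, hcosγ, ha, hb]
    field_simp
    ring
  refine ⟨arccos a, arccos b, arccos_pos.2 ha₂, arccos_pos.2 hb₂,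
    by linarith [arccos_lt_pi.2 ha₁, arccos_lt_pi.2 hb₁], ?_, ?_⟩
  · rw [cos_zero, cos_add, hcosβ, hcosγ]
    linear_combination a * hsum + sin (arccos a) * hsines - t₁ * hpyth
  · rw [sin_zero, sin_add, hcosβ, hcosγ]
    linear_combination sin (arccos a) * hsum - a * hsines

lemma exists_mul_tan_half_eq {h : ℝ} (hh : 0 < h) (x : ℝ) :
    ∃ θ ∈ Ioo (-π) π, h * tan (θ / 2) = x := by
  refine ⟨2 * arctan (x / h), ⟨?_, ?_⟩, ?_⟩
  · linarith [neg_pi_div_two_lt_arctan (x / h)]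
  · linarith [arctan_lt_pi_div_two (x / h)]
  · rw [mul_div_cancel_left₀ _ two_ne_zero, tan_arctan, mul_div_cancel₀ _ hh.ne']

section HalfAngle

variable {h θ : ℝ}

lemma sq_sub_sq_div_sq_add_sq_mul_tan_half (hh : 0 < h) (hθ : θ ∈ Ioo (-π) π) :
    (h ^ 2 - (h * tan (θ / 2)) ^ 2) / (h ^ 2 + (h * tan (θ / 2)) ^ 2) = cos θ := by
  have hcos : cos θ ≠ -1 := by
    have hsq : cos θ = 2 * cos (θ / 2) ^ 2 - 1 := by rw [← cos_two_mul]; ring_nf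
    have := pow_pos (cos_half_pos hθ) 2
    linarith
  rw [cos_eq_two_mul_tan_half_div_one_sub_tan_half_sq θ hcos]
  field_simp

lemma mul_tan_half_div_sq_add_sq (hh : 0 < h) :
    h * tan (θ / 2) / (h ^ 2 + (h * tan (θ / 2)) ^ 2) = sin θ / (2 * h) := by
  rw [sin_eq_two_mul_tan_half_div_one_add_tan_half_sq]
  field_simp

lemma mul_tan_half_mul_three_mul_sq_add_sq :
    h * tan (θ / 2) * (3 * h ^ 2 + (h * tan (θ / 2)) ^ 2) = h ^ 3 * capVolume θ := by
  rw [capVolume]; ring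

end HalfAngle

def DoubletEquations (t₁ t₂ t₃ w₁ w₂ x₁ x₂ x₃ h : ℝ) : Prop :=
  t₁ * (h ^ 2 - x₁ ^ 2) / (h ^ 2 + x₁ ^ 2) + t₂ * (h ^ 2 - x₂ ^ 2) / (h ^ 2 + x₂ ^ 2) +
      t₃ * (h ^ 2 - x₃ ^ 2) / (h ^ 2 + x₃ ^ 2) = 0 ∧
    t₁ * x₁ / (h ^ 2 + x₁ ^ 2) + t₂ * x₂ / (h ^ 2 + x₂ ^ 2) + t₃ * x₃ / (h ^ 2 + x₃ ^ 2) = 0 ∧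
    -x₁ * (3 * h ^ 2 + x₁ ^ 2) + x₃ * (3 * h ^ 2 + x₃ ^ 2) = w₁ ∧
    x₂ * (3 * h ^ 2 + x₂ ^ 2) - x₃ * (3 * h ^ 2 + x₃ ^ 2) = w₂

lemma doubletEquations_mul_tan_half_iff {t₁ t₂ t₃ w₁ w₂ h θ₁ θ₂ θ₃ : ℝ} (hh : 0 < h)
    (hθ₁ : θ₁ ∈ Ioo (-π) π) (hθ₂ : θ₂ ∈ Ioo (-π) π) (hθ₃ : θ₃ ∈ Ioo (-π) π) :
    DoubletEquations t₁ t₂ t₃ w₁ w₂ (h * tan (θ₁ / 2)) (h * tan (θ₂ / 2)) (h * tan (θ₃ / 2)) h ↔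
      ForceBalance t₁ t₂ t₃ θ₁ θ₂ θ₃ ∧ h ^ 3 * (capVolume θ₃ - capVolume θ₁) = w₁ ∧
        h ^ 3 * (capVolume θ₂ - capVolume θ₃) = w₂ := by
  simp only [DoubletEquations, ForceBalance, mul_div_assoc, neg_mul,
    sq_sub_sq_div_sq_add_sq_mul_tan_half hh, hθ₁, hθ₂, hθ₃, mul_tan_half_div_sq_add_sq hh,
    mul_tan_half_mul_three_mul_sq_add_sq, neg_add_eq_sub, ← mul_sub, and_assoc]
  rw [show t₁ * (sin θ₁ / (2 * h)) + t₂ * (sin θ₂ / (2 * h)) + t₃ * (sin θ₃ / (2 * h)) =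
    (t₁ * sin θ₁ + t₂ * sin θ₂ + t₃ * sin θ₃) / (2 * h) by ring, div_eq_zero_iff,
    or_iff_left (by positivity)]

/-- For surface tensions satisfying the strict triangle inequalities and positive volumes,
there is exactly one quadruple `(x₁, x₂, x₃, h)` with `h > 0` satisfying the Young–Dupré
force balance together with the volume constraints. -/
theorem stmt_10 (t₁ t₂ t₃ w₁ w₂ : ℝ) (ht₁ : 0 < t₁) (ht₂ : 0 < t₂) (ht₃ : 0 < t₃)
    (htri : 2 * max (max t₁ t₂) t₃ < t₁ + t₂ + t₃) (hw₁ : 0 < w₁) (hw₂ : 0 < w₂) :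
    ∃! p : ℝ × ℝ × ℝ × ℝ,
      0 < p.2.2.2 ∧
      t₁ * (p.2.2.2 ^ 2 - p.1 ^ 2) / (p.2.2.2 ^ 2 + p.1 ^ 2) +
        t₂ * (p.2.2.2 ^ 2 - p.2.1 ^ 2) / (p.2.2.2 ^ 2 + p.2.1 ^ 2) +
        t₃ * (p.2.2.2 ^ 2 - p.2.2.1 ^ 2) / (p.2.2.2 ^ 2 + p.2.2.1 ^ 2) = 0 ∧
      t₁ * p.1 / (p.2.2.2 ^ 2 + p.1 ^ 2) + t₂ * p.2.1 / (p.2.2.2 ^ 2 + p.2.1 ^ 2) +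
        t₃ * p.2.2.1 / (p.2.2.2 ^ 2 + p.2.2.1 ^ 2) = 0 ∧
      -p.1 * (3 * p.2.2.2 ^ 2 + p.1 ^ 2) + p.2.2.1 * (3 * p.2.2.2 ^ 2 + p.2.2.1 ^ 2) = w₁ ∧
      p.2.1 * (3 * p.2.2.2 ^ 2 + p.2.1 ^ 2) - p.2.2.1 * (3 * p.2.2.2 ^ 2 + p.2.2.1 ^ 2) = w₂ := by
  change ∃! p : ℝ × ℝ × ℝ × ℝ, 0 < p.2.2.2 ∧
    DoubletEquations t₁ t₂ t₃ w₁ w₂ p.1 p.2.1 p.2.2.1 p.2.2.2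
  obtain ⟨h₁, h₂, h₃⟩ := lt_add_of_two_mul_max_lt htri
  obtain ⟨β, γ, hβ, hγ, hβγ, hbal⟩ := exists_forceBalance ht₁ ht₂ ht₃ h₁ h₂ h₃
  obtain ⟨⟨φ, h⟩, ⟨hφ, hh, hV₁, hV₂⟩, huniq⟩ := existsUnique_capVolume_eq hβ hγ hβγ hw₁ hw₂
  dsimp only at hφ hh hV₁ hV₂
  refine ⟨(h * tan (φ / 2), h * tan ((φ + β + γ) / 2), h * tan ((φ + β) / 2), h),
    ⟨hh, ?_⟩, ?_⟩
  · obtain ⟨hφ₁, hφ₂⟩ := hφ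
    rw [doubletEquations_mul_tan_half_iff hh ⟨hφ₁, by linarith⟩ ⟨by linarith, by linarith⟩
      ⟨by linarith, by linarith⟩]
    exact ⟨by simpa only [add_zero, ← add_assoc] using hbal.const_add φ, hV₁, hV₂⟩
  · rintro ⟨x₁, x₂, x₃, k⟩ ⟨hk, hsol⟩
    dsimp only at hk hsol
    obtain ⟨θ₁, hθ₁, rfl⟩ := exists_mul_tan_half_eq hk x₁
    obtain ⟨θ₂, hθ₂, rfl⟩ := exists_mul_tan_half_eq hk x₂
    obtain ⟨θ₃, hθ₃, rfl⟩ := exists_mul_tan_half_eq hk x₃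
    obtain ⟨hbal', hk₁, hk₂⟩ := (doubletEquations_mul_tan_half_iff hk hθ₁ hθ₂ hθ₃).1 hsol
    have h₁₃ := lt_of_pow_mul_capVolume_sub_eq hk hθ₁ hθ₃ hw₁ hk₁
    have h₃₂ := lt_of_pow_mul_capVolume_sub_eq hk hθ₃ hθ₂ hw₂ hk₂
    obtain ⟨hδ, hε⟩ := hbal'.sub_eq_sub hbal ht₁ ht₂ ht₃ h₁₃ h₃₂ (by linarith [hθ₁.1, hθ₂.2])
      hβ (by linarith) (by linarith)
    obtain rfl : θ₃ = θ₁ + β := by linarith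
    obtain rfl : θ₂ = θ₁ + β + γ := by linarith
    obtain ⟨rfl, rfl⟩ :=
      Prod.mk.inj (huniq (θ₁, k) ⟨⟨hθ₁.1, by linarith [hθ₂.2]⟩, hk, hk₁, hk₂⟩)
    rfl
end

section
/- Let t₁, t₂, t₃ > 0 and w₁, w₂ > 0, and define ψ : ℝ → ℝ by ψ(x) = t₁·((x − w₁)²)^{1/3} + t₂·((x + w₂)²)^{1/3} + t₃·(x²)^{1/3}. Then the set of local minimum points of ψ is exactly {−w₂, 0, w₁}; in particular ψ is twice differentiable with ψ''(x) < 0 at every x ∉ {−w₂, 0, w₁}. -/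
/-!
Each term `tᵢ ((x - cᵢ)²)^{1/3} = tᵢ |x - cᵢ|^{2/3}` is smooth and strictly concave away from
its cusp `cᵢ`, so away from the three cusps `ψ'' < 0`, which rules out a local minimum. At a cusp
`c` the other two terms are differentiable, hence change by `O(|x - c|)`, while the cusp term
grows like `|x - c|^{2/3}` and wins.
-/

open Real Filter Topology Asymptotics

noncomputable def cusp (c y : ℝ) : ℝ := ((y - c) ^ 2) ^ ((1 : ℝ) / 3)

theorem cusp_eq_abs_rpow (c y : ℝ) : cusp c y = |y - c| ^ ((2 : ℝ) / 3) := by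
  rw [cusp, ← sq_abs, ← rpow_natCast, ← rpow_mul (abs_nonneg _)]
  norm_num

theorem cusp_nonneg (c y : ℝ) : 0 ≤ cusp c y := rpow_nonneg (sq_nonneg _) _

theorem cusp_self (c : ℝ) : cusp c c = 0 := by simp [cusp]

theorem contDiffAt_cusp {n : WithTop ℕ∞} {c y : ℝ} (h : y ≠ c) : ContDiffAt ℝ n (cusp c) y :=
  ((contDiffAt_id.sub contDiffAt_const).pow 2).rpow_const_of_ne
    (pow_ne_zero 2 (sub_ne_zero.2 h))

theorem hasDerivAt_cusp {c y : ℝ} (h : y ≠ c) :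
    HasDerivAt (cusp c) (2 / 3 * (y - c) * ((y - c) ^ 2) ^ (-(2 : ℝ) / 3)) y := by
  have hsq : HasDerivAt (fun z => (z - c) ^ 2) (2 * (y - c)) y := by
    simpa using ((hasDerivAt_id y).sub_const c).fun_pow 2
  refine (hsq.rpow_const (p := 1 / 3) (Or.inl (pow_ne_zero 2 (sub_ne_zero.2 h)))).congr_deriv ?_
  rw [show (1 / 3 : ℝ) - 1 = -2 / 3 by norm_num]
  ring

theorem differentiableAt_cusp {c y : ℝ} (h : y ≠ c) : DifferentiableAt ℝ (cusp c) y :=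
  (hasDerivAt_cusp h).differentiableAt

theorem hasDerivAt_deriv_cusp {c y : ℝ} (h : y ≠ c) :
    HasDerivAt (deriv (cusp c)) (-2 / 9 * ((y - c) ^ 2) ^ (-(2 : ℝ) / 3)) y := by
  have hpos : 0 < (y - c) ^ 2 := by positivity [sub_ne_zero.2 h]
  have hderiv : deriv (cusp c) =ᶠ[𝓝 y]
      fun z => 2 / 3 * (z - c) * ((z - c) ^ 2) ^ (-(2 : ℝ) / 3) :=
    (eventually_ne_nhds h).mono fun z hz => (hasDerivAt_cusp hz).deriv
  refine HasDerivAt.congr_of_eventuallyEq ?_ hderiv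
  have hsq : HasDerivAt (fun z => (z - c) ^ 2) (2 * (y - c)) y := by
    simpa using ((hasDerivAt_id y).sub_const c).fun_pow 2
  refine ((((hasDerivAt_id' y).sub_const c).const_mul (2 / 3 : ℝ)).mul
    (hsq.rpow_const (p := -2 / 3) (Or.inl hpos.ne'))).congr_deriv ?_
  rw [show (-2 / 3 : ℝ) - 1 = -2 / 3 + -1 by norm_num, rpow_add hpos, rpow_neg_one]
  field_simp
  ring

theorem deriv_deriv_cusp_neg {c y : ℝ} (h : y ≠ c) : deriv (deriv (cusp c)) y < 0 := by
  rw [(hasDerivAt_deriv_cusp h).deriv]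
  have : 0 < ((y - c) ^ 2) ^ (-(2 : ℝ) / 3) :=
    rpow_pos_of_pos (by positivity [sub_ne_zero.2 h]) _
  linarith

theorem isLittleO_sub_cusp (c : ℝ) : (fun y => y - c) =o[𝓝 c] cusp c := by
  have hcont : Continuous fun y : ℝ => |y - c| ^ ((1 : ℝ) / 3) :=
    (continuous_abs.comp (continuous_id.sub continuous_const)).rpow_const
      fun _ => Or.inr (by norm_num)
  have hsmall : (fun y => |y - c| ^ ((1 : ℝ) / 3)) =o[𝓝 c] fun _ => (1 : ℝ) :=
    (isLittleO_one_iff ℝ).2 (hcont.tendsto' c 0 (by simp))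
  have hsplit : ∀ y, ‖y - c‖ ≤ ‖|y - c| ^ ((1 : ℝ) / 3) * cusp c y‖ := fun y => by
    rw [cusp_eq_abs_rpow, ← rpow_add' (abs_nonneg _) (by norm_num)]
    norm_num
  simpa using (isBigO_of_le _ hsplit).trans_isLittleO (hsmall.mul_isBigO (isBigO_refl _ _))

theorem isLocalMin_of_differentiableAt_sub_const_mul_cusp {f : ℝ → ℝ} {t c : ℝ} (ht : 0 < t)
    (hf : DifferentiableAt ℝ (fun y => f y - t * cusp c y) c) : IsLocalMin f c := by
  filter_upwards [(hf.hasDerivAt.isBigO_sub.trans_isLittleO (isLittleO_sub_cusp c)).bound ht]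
    with y hy
  rw [Real.norm_eq_abs, Real.norm_of_nonneg (cusp_nonneg c y), cusp_self, mul_zero,
    sub_zero] at hy
  linarith [neg_abs_le (f y - t * cusp c y - f c)]

theorem IsLocalMin.deriv_deriv_nonneg {f : ℝ → ℝ} {x : ℝ} (hmin : IsLocalMin f x)
    (hf : ContinuousAt f x) : 0 ≤ deriv (deriv f) x := by
  by_contra! hneg
  have hmax := isLocalMax_of_deriv_deriv_neg hneg hmin.deriv_eq_zero hf
  have hconst : f =ᶠ[𝓝 x] fun _ => f x := by
    filter_upwards [hmin, hmax] with y h₁ h₂ using le_antisymm h₂ h₁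
  have : deriv f =ᶠ[𝓝 x] fun _ => 0 := by simpa using hconst.deriv
  simp [this.deriv_eq] at hneg

def HasNegSecondDerivAt (f : ℝ → ℝ) (x : ℝ) : Prop :=
  ContDiffAt ℝ 2 f x ∧ deriv (deriv f) x < 0

theorem HasNegSecondDerivAt.add {f g : ℝ → ℝ} {x : ℝ} (hf : HasNegSecondDerivAt f x)
    (hg : HasNegSecondDerivAt g x) : HasNegSecondDerivAt (fun y => f y + g y) x := by
  refine ⟨hf.1.add hg.1, ?_⟩
  have hsum := iteratedDeriv_fun_add hf.1 hg.1
  simp only [iteratedDeriv_succ, iteratedDeriv_zero] at hsum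
  linarith [hf.2, hg.2]

theorem hasNegSecondDerivAt_const_mul_cusp {t c y : ℝ} (ht : 0 < t) (h : y ≠ c) :
    HasNegSecondDerivAt (fun z => t * cusp c z) y := by
  refine ⟨contDiffAt_const.mul (contDiffAt_cusp h), ?_⟩
  simp only [deriv_const_mul_field']
  exact mul_neg_of_pos_of_neg ht (deriv_deriv_cusp_neg h)

theorem HasNegSecondDerivAt.not_isLocalMin {f : ℝ → ℝ} {x : ℝ}
    (hf : HasNegSecondDerivAt f x) : ¬IsLocalMin f x := fun hmin =>
  hf.2.not_ge (hmin.deriv_deriv_nonneg hf.1.continuousAt)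

/-- The restricted energy `ψ(x) = t₁((x−w₁)²)^{1/3} + t₂((x+w₂)²)^{1/3} + t₃(x²)^{1/3}`
has exactly `{−w₂, 0, w₁}` as its set of local minimum points; moreover `ψ` is twice
differentiable with `ψ'' < 0` away from these three points. -/
theorem stmt_11 (t₁ t₂ t₃ w₁ w₂ : ℝ) (ht₁ : 0 < t₁) (ht₂ : 0 < t₂) (ht₃ : 0 < t₃)
    (hw₁ : 0 < w₁) (hw₂ : 0 < w₂) (ψ : ℝ → ℝ)
    (hψ : ψ = fun x : ℝ =>
      t₁ * ((x - w₁) ^ 2) ^ ((1 : ℝ) / 3) + t₂ * ((x + w₂) ^ 2) ^ ((1 : ℝ) / 3) +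
        t₃ * (x ^ 2) ^ ((1 : ℝ) / 3)) :
    (∀ x : ℝ, IsLocalMin ψ x ↔ x = -w₂ ∨ x = 0 ∨ x = w₁) ∧
    (∀ x : ℝ, x ≠ -w₂ → x ≠ 0 → x ≠ w₁ →
      ContDiffAt ℝ 2 ψ x ∧ deriv (deriv ψ) x < 0) := by
  replace hψ : ψ = fun x => t₁ * cusp w₁ x + t₂ * cusp (-w₂) x + t₃ * cusp 0 x := by
    simp [hψ, cusp]
  have hconcave : ∀ x, x ≠ -w₂ → x ≠ 0 → x ≠ w₁ → HasNegSecondDerivAt ψ x :=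
    fun x h₂ h₀ h₁ => hψ ▸ ((hasNegSecondDerivAt_const_mul_cusp ht₁ h₁).add
      (hasNegSecondDerivAt_const_mul_cusp ht₂ h₂)).add (hasNegSecondDerivAt_const_mul_cusp ht₃ h₀)
  have hterm (c t : ℝ) {y : ℝ} (h : y ≠ c) : DifferentiableAt ℝ (fun z => t * cusp c z) y :=
    (differentiableAt_cusp h).const_mul t
  have hψ_sub {c t : ℝ} {g : ℝ → ℝ} (hg : DifferentiableAt ℝ g c)
      (hψg : ∀ y, ψ y - t * cusp c y = g y) : DifferentiableAt ℝ (fun y => ψ y - t * cusp c y) c :=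
    hg.congr_of_eventuallyEq (.of_forall hψg)
  have hmin₂ : IsLocalMin ψ (-w₂) := isLocalMin_of_differentiableAt_sub_const_mul_cusp ht₂ <|
    hψ_sub ((hterm w₁ t₁ (by linarith)).fun_add (hterm 0 t₃ (by linarith)))
      fun y => by simp only [hψ]; ring
  have hmin₀ : IsLocalMin ψ 0 := isLocalMin_of_differentiableAt_sub_const_mul_cusp ht₃ <|
    hψ_sub ((hterm w₁ t₁ (by linarith)).fun_add (hterm (-w₂) t₂ (by linarith)))
      fun y => by simp only [hψ]; ring
  have hmin₁ : IsLocalMin ψ w₁ := isLocalMin_of_differentiableAt_sub_const_mul_cusp ht₁ <|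
    hψ_sub ((hterm (-w₂) t₂ (by linarith)).fun_add (hterm 0 t₃ (by linarith)))
      fun y => by simp only [hψ]; ring
  refine ⟨fun x => ⟨fun hmin => ?_, ?_⟩, hconcave⟩
  · by_contra! h
    exact (hconcave x h.1 h.2.1 h.2.2).not_isLocalMin hmin
  · rintro (rfl | rfl | rfl) <;> assumption
end

section
/- Let α₁, α₂, α₃, κ, y be real numbers and t₁, t₂, t₃ > 0 satisfy t₁cos α₁ + t₂cos α₂ + t₃cos α₃ + κy = 0 and t₁sin α₁ + t₂sin α₂ + t₃sin α₃ = 0, and define φ_k = α_{k+1} − α_{k−1} with indices mod 3. Then for every k ∈ {1,2,3}: cos φ_k = (t_k² − t_{k−1}² − t_{k+1}² + κy(2t_k·cos α_k + κy)) / (2 t_{k−1} t_{k+1}). -/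
/-- From the modified (line-tension) force-balance equations with positive surface
tensions, the generalized law of cosines holds for every `k ∈ {1,2,3}` (indices mod 3). -/
theorem stmt_15 (α₁ α₂ α₃ κ y t₁ t₂ t₃ : ℝ) (ht₁ : 0 < t₁) (ht₂ : 0 < t₂) (ht₃ : 0 < t₃)
    (hcos : t₁ * Real.cos α₁ + t₂ * Real.cos α₂ + t₃ * Real.cos α₃ + κ * y = 0)
    (hsin : t₁ * Real.sin α₁ + t₂ * Real.sin α₂ + t₃ * Real.sin α₃ = 0)
    (φ₁ φ₂ φ₃ : ℝ) (hφ₁ : φ₁ = α₂ - α₃) (hφ₂ : φ₂ = α₃ - α₁) (hφ₃ : φ₃ = α₁ - α₂) :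
    Real.cos φ₁ =
      (t₁ ^ 2 - t₃ ^ 2 - t₂ ^ 2 + κ * y * (2 * t₁ * Real.cos α₁ + κ * y)) / (2 * t₃ * t₂) ∧
    Real.cos φ₂ =
      (t₂ ^ 2 - t₁ ^ 2 - t₃ ^ 2 + κ * y * (2 * t₂ * Real.cos α₂ + κ * y)) / (2 * t₁ * t₃) ∧
    Real.cos φ₃ =
      (t₃ ^ 2 - t₂ ^ 2 - t₁ ^ 2 + κ * y * (2 * t₃ * Real.cos α₃ + κ * y)) / (2 * t₂ * t₁) := by
  have p1 := Real.sin_sq_add_cos_sq α₁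
  have p2 := Real.sin_sq_add_cos_sq α₂
  have p3 := Real.sin_sq_add_cos_sq α₃
  subst hφ₁ hφ₂ hφ₃
  rw [Real.cos_sub, Real.cos_sub, Real.cos_sub]
  refine ⟨?_, ?_, ?_⟩ <;> field_simp
  · linear_combination (t₂ * Real.cos α₂ + t₃ * Real.cos α₃ - t₁ * Real.cos α₁ - κ * y) * hcos
      + (t₂ * Real.sin α₂ + t₃ * Real.sin α₃ - t₁ * Real.sin α₁) * hsin
      + t₁ ^ 2 * p1 - t₂ ^ 2 * p2 - t₃ ^ 2 * p3
  · linear_combination (t₃ * Real.cos α₃ + t₁ * Real.cos α₁ - t₂ * Real.cos α₂ - κ * y) * hcos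
      + (t₃ * Real.sin α₃ + t₁ * Real.sin α₁ - t₂ * Real.sin α₂) * hsin
      + t₂ ^ 2 * p2 - t₃ ^ 2 * p3 - t₁ ^ 2 * p1
  · linear_combination (t₁ * Real.cos α₁ + t₂ * Real.cos α₂ - t₃ * Real.cos α₃ - κ * y) * hcos
      + (t₁ * Real.sin α₁ + t₂ * Real.sin α₂ - t₃ * Real.sin α₃) * hsin
      + t₃ ^ 2 * p3 - t₁ ^ 2 * p1 - t₂ ^ 2 * p2
end

section
/- Let t₁, t₂, t₃, κ > 0 and w₁, w₂ > 0, set w₃ = w₁ + w₂, t_s = t₁ + t₂ + t₃ and u = (t_s/κ)·(w₃/2)^{1/3}. Suppose (z₁, z₂, z₃, y) ∈ ℝ⁴ with y > 0 satisfies the system: t₁(1−z₁²)/(1+z₁²) + t₂(1−z₂²)/(1+z₂²) + t₃(1−z₃²)/(1+z₃²) + κy = 0, t₁z₁/(1+z₁²) + t₂z₂/(1+z₂²) + t₃z₃/(1+z₃²) = 0, −z₁(z₁²+3) + z₃(z₃²+3) = w₁y³, and z₂(z₂²+3) − z₃(z₃²+3) = w₂y³. If for some k ∈ {1,2,3} (indices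 mod 3) one has t_k − t_{k+1} − t_{k−1} ≥ 0, then t_{k+1} + t_{k−1} ≥ t_s·cosh((1/3)·arcsinh(u³))/√(u⁶ + 1). -/
/-!
Write `z = tan (θ/2)`. The first two equations say that the unit vectors `e^{iθ_k}`, weighted by
`t_k`, balance the line-tension force `-κy`; the last two say that the reduced cap volumes
`capVol z = z (z² + 3)` satisfy `capVol z₁ < capVol z₃ < capVol z₂`. If `t_k ≥ T`, where `T` is the
sum of the other two tensions, the triangle inequality for those two forces makes the `k`-th cap
obtuse with `t_k ≤ T |z_k|`. Hence `w₃ y³ = capVol z₂ - capVol z₁ ≥ capVol m` for `m = t_k / T ≥ 1`,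
and with `κy ≤ t_s` this gives `capVol m ≤ 2u³`. Since `2 sinh 3b = capVol (2 sinh b)` and
`cosh 3b = cosh b (1 + 4 sinh² b)`, for `3b = arsinh u³` we get `m ≤ 2 sinh b`, and the right-hand
side of the claim equals `t_s / (1 + 4 sinh² b) ≤ t_s / (1 + m) = T`.
-/

open Real

/-- `(π/6) h³ · capVol z` is the volume of a spherical cap over a disc of radius `h` whose half
aperture angle has tangent `z`. -/
def capVol (z : ℝ) : ℝ := z * (z ^ 2 + 3)

lemma strictMono_capVol : StrictMono capVol := fun a b hab => by
  unfold capVol; nlinarith [sq_nonneg (a + b), sq_nonneg (a - b), sq_nonneg a, sq_nonneg b]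

lemma capVol_neg (z : ℝ) : capVol (-z) = -capVol z := by unfold capVol; ring

lemma capVol_nonneg {z : ℝ} (hz : 0 ≤ z) : 0 ≤ capVol z := by unfold capVol; positivity

lemma capVol_abs_le_sub {a b x : ℝ} (ha : a ≤ 0) (hb : 0 ≤ b) (hax : a ≤ x) (hxb : x ≤ b) :
    capVol |x| ≤ capVol b - capVol a := by
  have hb' := capVol_nonneg hb
  have ha' : capVol a ≤ 0 := by simpa [capVol_neg] using capVol_nonneg (neg_nonneg.2 ha)
  rcases abs_cases x with ⟨hx, -⟩ | ⟨hx, -⟩ <;> rw [hx]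
  · linarith [strictMono_capVol.monotone hxb]
  · linarith [strictMono_capVol.monotone hax, capVol_neg x]

lemma two_mul_sinh_three_mul (b : ℝ) : 2 * sinh (3 * b) = capVol (2 * sinh b) := by
  rw [sinh_three_mul, capVol]; ring

lemma cosh_three_mul_eq (b : ℝ) : cosh (3 * b) = cosh b * (1 + 4 * sinh b ^ 2) := by
  rw [cosh_three_mul]; linear_combination 4 * cosh b * cosh_sq b

lemma cosh_third_arsinh_div_sqrt (v : ℝ) :
    cosh (1 / 3 * arsinh v) / √(v ^ 2 + 1) = 1 / (1 + 4 * sinh (1 / 3 * arsinh v) ^ 2) := by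
  have h : √(v ^ 2 + 1) = cosh (1 / 3 * arsinh v) * (1 + 4 * sinh (1 / 3 * arsinh v) ^ 2) := by
    rw [← cosh_three_mul_eq, show 3 * (1 / 3 * arsinh v) = arsinh v by ring, cosh_arsinh,
      add_comm]
  rw [h, div_mul_cancel_left₀ (cosh_pos _).ne']
  exact (one_div _).symm

lemma le_two_mul_sinh_third_arsinh {m v : ℝ} (h : capVol m ≤ 2 * v) :
    m ≤ 2 * sinh (1 / 3 * arsinh v) := by
  rwa [← strictMono_capVol.le_iff_le, ← two_mul_sinh_three_mul,
    show 3 * (1 / 3 * arsinh v) = arsinh v by ring, sinh_arsinh]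

lemma one_add_mul_cosh_third_arsinh_div_sqrt_le {m v : ℝ} (hm : 1 ≤ m) (h : capVol m ≤ 2 * v) :
    (1 + m) * cosh (1 / 3 * arsinh v) / √(v ^ 2 + 1) ≤ 1 := by
  have hs := le_two_mul_sinh_third_arsinh h
  rw [mul_div_assoc, cosh_third_arsinh_div_sqrt, mul_one_div, div_le_one (by positivity)]
  nlinarith

lemma Complex.re_neg_of_add_add_eq_neg_ofReal {a b c : ℂ} {β : ℝ} (hβ : 0 < β)
    (h : a + b + c = -β) (hdom : ‖b‖ + ‖c‖ ≤ ‖a‖) : a.re < 0 := by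
  have hsq : ‖a + β‖ ^ 2 = ‖a‖ ^ 2 + 2 * β * a.re + β ^ 2 := by
    simp only [Complex.sq_norm, Complex.normSq_apply, Complex.add_re, Complex.add_im,
      Complex.ofReal_re, Complex.ofReal_im]
    ring
  have hle : ‖a + β‖ ≤ ‖a‖ := by
    rw [show a + β = -(b + c) by linear_combination h, norm_neg]
    exact (norm_add_le b c).trans hdom
  nlinarith [norm_nonneg (a + β)]

/-- The unit vector `e^{iθ}` for `z = tan (θ/2)`. -/
noncomputable def capDir (z : ℝ) : ℂ := ⟨(1 - z ^ 2) / (1 + z ^ 2), 2 * z / (1 + z ^ 2)⟩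

lemma norm_capDir (z : ℝ) : ‖capDir z‖ = 1 := by
  have : (0 : ℝ) < 1 + z ^ 2 := by positivity
  rw [Complex.norm_def, Complex.normSq_mk, capDir, Real.sqrt_eq_one]
  field_simp
  ring

lemma norm_mul_capDir {t : ℝ} (ht : 0 ≤ t) (z : ℝ) : ‖(t : ℂ) * capDir z‖ = t := by
  rw [norm_mul, norm_capDir, Complex.norm_of_nonneg ht, mul_one]

lemma le_mul_abs_of_force_balance {ta tb tc β za zb zc : ℝ} (hta : 0 < ta) (htb : 0 ≤ tb)
    (htc : 0 ≤ tc) (hβ : 0 < β) (hdom : tb + tc ≤ ta)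
    (h : (ta : ℂ) * capDir za + tb * capDir zb + tc * capDir zc = -β) :
    ta ≤ (tb + tc) * |za| := by
  have hpos : (0 : ℝ) < 1 + za ^ 2 := by positivity
  have hre := Complex.re_neg_of_add_add_eq_neg_ofReal hβ h (by
    rwa [norm_mul_capDir htb, norm_mul_capDir htc, norm_mul_capDir hta.le])
  have him : |((ta : ℂ) * capDir za).im| ≤ tb + tc := by
    calc _ = |((ta : ℂ) * capDir za + β).im| := by simp
      _ ≤ ‖(ta : ℂ) * capDir za + β‖ := Complex.abs_im_le_norm _
      _ = ‖(tb : ℂ) * capDir zb + tc * capDir zc‖ := by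
          rw [show (ta : ℂ) * capDir za + β = -(tb * capDir zb + tc * capDir zc) by
            linear_combination h, norm_neg]
      _ ≤ tb + tc := by
          grw [norm_add_le, norm_mul_capDir htb, norm_mul_capDir htc]
  simp only [Complex.re_ofReal_mul, Complex.im_ofReal_mul, capDir] at hre him
  have hz : 1 < za ^ 2 := by
    by_contra! hz
    have : 0 ≤ ta * ((1 - za ^ 2) / (1 + za ^ 2)) :=
      mul_nonneg hta.le (div_nonneg (by linarith) hpos.le)
    linarith
  rw [abs_mul, abs_of_pos hta, abs_div, abs_of_pos hpos, abs_mul, abs_two, mul_div_assoc',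
    div_le_iff₀ hpos] at him
  have hza : 0 < |za| := abs_pos.2 (by rintro rfl; norm_num at hz)
  nlinarith [sq_abs za]

lemma nonpos_and_nonneg_of_weighted_sum_eq_zero {t₁ t₂ t₃ z₁ z₂ z₃ : ℝ} (ht₁ : 0 < t₁)
    (ht₂ : 0 < t₂) (ht₃ : 0 < t₃) (h₁₃ : z₁ ≤ z₃) (h₃₂ : z₃ ≤ z₂)
    (h : t₁ * z₁ / (1 + z₁ ^ 2) + t₂ * z₂ / (1 + z₂ ^ 2) + t₃ * z₃ / (1 + z₃ ^ 2) = 0) :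
    z₁ ≤ 0 ∧ 0 ≤ z₂ := by
  have term_neg {t z : ℝ} (ht : 0 < t) (hz : z < 0) : t * z / (1 + z ^ 2) < 0 :=
    div_neg_of_neg_of_pos (mul_neg_of_pos_of_neg ht hz) (by positivity)
  constructor
  · by_contra! hz₁
    have : 0 < z₃ := hz₁.trans_le h₁₃
    have : 0 < z₂ := this.trans_le h₃₂
    have : 0 < t₁ * z₁ / (1 + z₁ ^ 2) + t₂ * z₂ / (1 + z₂ ^ 2) + t₃ * z₃ / (1 + z₃ ^ 2) := by
      positivity
    linarith
  · by_contra! hz₂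
    linarith [term_neg ht₁ ((h₁₃.trans h₃₂).trans_lt hz₂), term_neg ht₂ hz₂,
      term_neg ht₃ (h₃₂.trans_lt hz₂)]

lemma mul_cosh_third_arsinh_div_sqrt_le_of_dominant_cap {tk T ts κ w y u z₁ z₂ zk : ℝ}
    (hts : tk + T = ts) (hT : 0 < T) (hdom : T ≤ tk) (hzk : tk ≤ T * |zk|) (hκ : 0 < κ)
    (hy : 0 ≤ y) (hw : 0 ≤ w)
    (hβ : κ * y ≤ ts) (hz₁ : z₁ ≤ 0) (hz₂ : 0 ≤ z₂) (h₁ : z₁ ≤ zk) (h₂ : zk ≤ z₂)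
    (hvol : capVol z₂ - capVol z₁ = w * y ^ 3) (hu : u = ts / κ * (w / 2) ^ ((1 : ℝ) / 3)) :
    ts * cosh (1 / 3 * arsinh (u ^ 3)) / √(u ^ 6 + 1) ≤ T := by
  set m := tk / T
  have hm : 1 ≤ m := (one_le_div hT).2 hdom
  have hu3 : u ^ 3 = (ts / κ) ^ 3 * (w / 2) := by
    rw [hu, mul_pow, ← Real.rpow_natCast ((w / 2) ^ _), ← Real.rpow_mul (by positivity)]
    norm_num
  have hvol' : capVol m ≤ 2 * u ^ 3 :=
    calc capVol m ≤ capVol |zk| := strictMono_capVol.monotone ((div_le_iff₀' hT).2 hzk)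
      _ ≤ capVol z₂ - capVol z₁ := capVol_abs_le_sub hz₁ hz₂ h₁ h₂
      _ = w * y ^ 3 := hvol
      _ ≤ w * (ts / κ) ^ 3 := by gcongr; exact (le_div_iff₀' hκ).2 hβ
      _ = 2 * u ^ 3 := by rw [hu3]; ring
  have hts' : ts = T * (1 + m) := by rw [← hts]; simp only [m]; field_simp; ring
  calc ts * cosh (1 / 3 * arsinh (u ^ 3)) / √(u ^ 6 + 1)
      = T * ((1 + m) * cosh (1 / 3 * arsinh (u ^ 3)) / √((u ^ 3) ^ 2 + 1)) := by
        rw [hts']; ring_nf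
    _ ≤ T * 1 := by gcongr; exact one_add_mul_cosh_third_arsinh_div_sqrt_le hm hvol'
    _ = T := mul_one T

/-- For the reduced critical-point system of a doublet with line tension: if
`t_k − t_{k+1} − t_{k−1} ≥ 0` for some `k`, then
`t_{k+1} + t_{k−1} ≥ t_s·cosh((1/3)arcsinh(u³))/√(u⁶+1)` where
`u = (t_s/κ)(w₃/2)^{1/3}`. -/
theorem stmt_18 (t₁ t₂ t₃ κ w₁ w₂ : ℝ) (ht₁ : 0 < t₁) (ht₂ : 0 < t₂) (ht₃ : 0 < t₃)
    (hκ : 0 < κ) (hw₁ : 0 < w₁) (hw₂ : 0 < w₂)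
    (u : ℝ) (hu : u = (t₁ + t₂ + t₃) / κ * ((w₁ + w₂) / 2) ^ ((1 : ℝ) / 3))
    (z₁ z₂ z₃ y : ℝ) (hy : 0 < y)
    (heq₁ : t₁ * (1 - z₁ ^ 2) / (1 + z₁ ^ 2) + t₂ * (1 - z₂ ^ 2) / (1 + z₂ ^ 2) +
      t₃ * (1 - z₃ ^ 2) / (1 + z₃ ^ 2) + κ * y = 0)
    (heq₂ : t₁ * z₁ / (1 + z₁ ^ 2) + t₂ * z₂ / (1 + z₂ ^ 2) + t₃ * z₃ / (1 + z₃ ^ 2) = 0)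
    (heq₃ : -z₁ * (z₁ ^ 2 + 3) + z₃ * (z₃ ^ 2 + 3) = w₁ * y ^ 3)
    (heq₄ : z₂ * (z₂ ^ 2 + 3) - z₃ * (z₃ ^ 2 + 3) = w₂ * y ^ 3) :
    (t₁ - t₂ - t₃ ≥ 0 →
      t₂ + t₃ ≥ (t₁ + t₂ + t₃) * Real.cosh ((1 / 3) * Real.arsinh (u ^ 3)) /
        Real.sqrt (u ^ 6 + 1)) ∧
    (t₂ - t₃ - t₁ ≥ 0 →
      t₃ + t₁ ≥ (t₁ + t₂ + t₃) * Real.cosh ((1 / 3) * Real.arsinh (u ^ 3)) /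
        Real.sqrt (u ^ 6 + 1)) ∧
    (t₃ - t₁ - t₂ ≥ 0 →
      t₁ + t₂ ≥ (t₁ + t₂ + t₃) * Real.cosh ((1 / 3) * Real.arsinh (u ^ 3)) /
        Real.sqrt (u ^ 6 + 1)) := by
  have hβ : 0 < κ * y := mul_pos hκ hy
  have h₁₃ : z₁ ≤ z₃ := strictMono_capVol.le_iff_le.1 <| by
    unfold capVol; nlinarith [mul_pos hw₁ (pow_pos hy 3)]
  have h₃₂ : z₃ ≤ z₂ := strictMono_capVol.le_iff_le.1 <| by
    unfold capVol; nlinarith [mul_pos hw₂ (pow_pos hy 3)]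
  obtain ⟨hz₁, hz₂⟩ := nonpos_and_nonneg_of_weighted_sum_eq_zero ht₁ ht₂ ht₃ h₁₃ h₃₂ heq₂
  have hvol : capVol z₂ - capVol z₁ = (w₁ + w₂) * y ^ 3 := by
    unfold capVol; linear_combination heq₃ + heq₄
  have hforce : (t₁ : ℂ) * capDir z₁ + t₂ * capDir z₂ + t₃ * capDir z₃ = -(κ * y : ℝ) := by
    apply Complex.ext
    · simp only [capDir, Complex.add_re, Complex.re_ofReal_mul, Complex.neg_re, Complex.ofReal_re]
      linear_combination heq₁
    · simp only [capDir, Complex.add_im, Complex.im_ofReal_mul, Complex.neg_im, Complex.ofReal_im]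
      linear_combination 2 * heq₂
  have hβts : κ * y ≤ t₁ + t₂ + t₃ := by
    have : ‖(t₁ : ℂ) * capDir z₁ + t₂ * capDir z₂ + t₃ * capDir z₃‖ ≤ _ := norm_add₃_le
    rwa [hforce, norm_neg, Complex.norm_of_nonneg hβ.le, norm_mul_capDir ht₁.le,
      norm_mul_capDir ht₂.le, norm_mul_capDir ht₃.le] at this
  refine ⟨fun hk => ?_, fun hk => ?_, fun hk => ?_⟩
  · have hzk := le_mul_abs_of_force_balance ht₁ ht₂.le ht₃.le hβ (by linarith) hforce
    exact mul_cosh_third_arsinh_div_sqrt_le_of_dominant_cap (by ring) (by positivity)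
      (by linarith) hzk hκ hy.le (by positivity) hβts hz₁ hz₂ le_rfl (h₁₃.trans h₃₂) hvol hu
  · have hzk := le_mul_abs_of_force_balance (za := z₂) (zb := z₃) (zc := z₁) ht₂ ht₃.le ht₁.le hβ
      (by linarith) (by linear_combination hforce)
    exact mul_cosh_third_arsinh_div_sqrt_le_of_dominant_cap (by ring) (by positivity)
      (by linarith) hzk hκ hy.le (by positivity) hβts hz₁ hz₂ (h₁₃.trans h₃₂) le_rfl hvol hu
  · have hzk := le_mul_abs_of_force_balance (za := z₃) (zb := z₁) (zc := z₂) ht₃ ht₁.le ht₂.le hβ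
      (by linarith) (by linear_combination hforce)
    exact mul_cosh_third_arsinh_div_sqrt_le_of_dominant_cap (by ring) (by positivity)
      (by linarith) hzk hκ hy.le (by positivity) hβts hz₁ hz₂ h₁₃ h₃₂ hvol hu
end

section
/- Let α₁, α₂, α₃, t₁, t₂, t₃, κ, y be real numbers satisfying t₁cos α₁ + t₂cos α₂ + t₃cos α₃ + κy = 0 and t₁sin α₁ + t₂sin α₂ + t₃sin α₃ = 0, and define φ_k = α_{k+1} − α_{k−1} with indices mod 3. Then for all real λ and μ, the modified tensions t̂_k = λt_k + μ·sin φ_k (k = 1,2,3) and κ̂ = λκ satisfy the same balance equations: t̂₁cos α₁ + t̂₂cos α₂ + t̂₃cos α₃ + κ̂y = 0 and t̂₁sin α₁ + t̂₂sin α₂ + t̂₃sin α₃ = 0. In particular (taking λ = 0, μ = 1), sin φ₁·cos α₁ + sin φ₂·cos α₂ + sin φ₃·cos α₃ = 0 and sin φ₁·sin α₁ + sin φ₂·sin α₂ + sin φ₃·sin α₃ = 0. -/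
/-- Non-identifiability of tensions in the presence of line tension: if
`(t₁,t₂,t₃,κ)` balances at angles `α₁,α₂,α₃` with junction parameter `y`,
then so does `(λt₁ + μ sin φ₁, λt₂ + μ sin φ₂, λt₃ + μ sin φ₃, λκ)` for all real `λ, μ`;
in particular the sine-vector `(sin φ₁, sin φ₂, sin φ₃)` itself satisfies both
balance equations with zero line tension. -/
theorem stmt_19 (α₁ α₂ α₃ t₁ t₂ t₃ κ y : ℝ)
    (hcos : t₁ * Real.cos α₁ + t₂ * Real.cos α₂ + t₃ * Real.cos α₃ + κ * y = 0)
    (hsin : t₁ * Real.sin α₁ + t₂ * Real.sin α₂ + t₃ * Real.sin α₃ = 0)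
    (φ₁ φ₂ φ₃ : ℝ) (hφ₁ : φ₁ = α₂ - α₃) (hφ₂ : φ₂ = α₃ - α₁) (hφ₃ : φ₃ = α₁ - α₂) :
    (∀ lam mu : ℝ,
      (lam * t₁ + mu * Real.sin φ₁) * Real.cos α₁ +
        (lam * t₂ + mu * Real.sin φ₂) * Real.cos α₂ +
        (lam * t₃ + mu * Real.sin φ₃) * Real.cos α₃ + (lam * κ) * y = 0 ∧
      (lam * t₁ + mu * Real.sin φ₁) * Real.sin α₁ +
        (lam * t₂ + mu * Real.sin φ₂) * Real.sin α₂ +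
        (lam * t₃ + mu * Real.sin φ₃) * Real.sin α₃ = 0) ∧
    (Real.sin φ₁ * Real.cos α₁ + Real.sin φ₂ * Real.cos α₂ + Real.sin φ₃ * Real.cos α₃ = 0 ∧
      Real.sin φ₁ * Real.sin α₁ + Real.sin φ₂ * Real.sin α₂ + Real.sin φ₃ * Real.sin α₃ = 0) := by
  subst hφ₁ hφ₂ hφ₃
  have h1 : Real.sin (α₂ - α₃) * Real.cos α₁ + Real.sin (α₃ - α₁) * Real.cos α₂ +
      Real.sin (α₁ - α₂) * Real.cos α₃ = 0 := by
    simp only [Real.sin_sub]; ring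
  have h2 : Real.sin (α₂ - α₃) * Real.sin α₁ + Real.sin (α₃ - α₁) * Real.sin α₂ +
      Real.sin (α₁ - α₂) * Real.sin α₃ = 0 := by
    simp only [Real.sin_sub]; ring
  exact ⟨fun lam mu => ⟨by linear_combination lam * hcos + mu * h1, by linear_combination lam * hsin + mu * h2⟩, h1, h2⟩
end
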